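/- arXiv:1210.6475 — 7 statements merged into one kernel-verified Lean document; each statement's English description precedes it below -/
import Mathlib

section
/- Let V : ℝ → ℝ be Lebesgue integrable, let x₀ and x be real numbers with x ≠ x₀, and for y in the closed interval with endpoints x and x₀ set F(y) = |∫_y^{x₀} |V(t)| dt|. Let n ∈ ℕ and let f be a continuous complex-valued function on the closed interval with endpoints x and x₀ such that |f(y)| ≤ F(y)ⁿ/n! for every y in that interval. Then |∫_x^{x₀} f(t)·V(t) dt| ≤ F(x)^{n+1}/(n+1)!. -/
/-!
Write `G t = ∫_t^{x₀} |V|`, so that `F = |G|`. The function `G` is absolutely continuous with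
`G' = -|V|` almost everywhere, so the fundamental theorem of calculus for absolutely continuous
functions gives `∫_x^{x₀} G^n |V| = G(x)^{n+1}/(n+1)`. As `G` has constant sign between `x` and
`x₀`, the same holds for `|G|^n` up to sign, and the bound on `f` finishes the estimate.
-/

open MeasureTheory intervalIntegral Set
open scoped Interval

theorem AbsolutelyContinuousOnInterval.pow {f : ℝ → ℝ} {a b : ℝ}
    (hf : AbsolutelyContinuousOnInterval f a b) (n : ℕ) :
    AbsolutelyContinuousOnInterval (fun x => f x ^ n) a b := by
  induction n with
  | zero =>
    simpa using (LipschitzWith.const (1 : ℝ)).lipschitzOnWith.absolutelyContinuousOnInterval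
  | succ n ih => simpa only [pow_succ] using ih.fun_mul hf

theorem AbsolutelyContinuousOnInterval.integral_pow_mul_deriv {f : ℝ → ℝ} {a b : ℝ}
    (hf : AbsolutelyContinuousOnInterval f a b) (n : ℕ) :
    ∫ x in a..b, f x ^ n * deriv f x = (f b ^ (n + 1) - f a ^ (n + 1)) / (n + 1) := by
  have hderiv : ∀ᵐ x, x ∈ Ι a b →
      (n + 1) * (f x ^ n * deriv f x) = deriv (fun x => f x ^ (n + 1)) x := by
    filter_upwards [hf.ae_differentiableAt] with x hx hxab
    rw [deriv_fun_pow (hx (uIoc_subset_uIcc hxab))]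
    push_cast
    ring
  rw [eq_div_iff (by positivity), ← (hf.pow (n + 1)).integral_deriv_eq_sub, mul_comm,
    ← intervalIntegral.integral_const_mul]
  exact integral_congr_ae hderiv

theorem integral_pow_integral_mul {g : ℝ → ℝ} {a b : ℝ}
    (hg : IntervalIntegrable g volume a b) (n : ℕ) :
    ∫ t in a..b, (∫ s in t..b, g s) ^ n * g t = (∫ s in a..b, g s) ^ (n + 1) / (n + 1) := by
  set G : ℝ → ℝ := fun t => ∫ s in t..b, g s
  have hG_symm : G = -fun t => ∫ s in b..t, g s := by
    funext t
    exact integral_symm b t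
  have hG : AbsolutelyContinuousOnInterval G a b := by
    rw [hG_symm]
    exact (hg.absolutelyContinuousOnInterval_intervalIntegral right_mem_uIcc).neg
  have hderiv : ∀ᵐ t, t ∈ Ι a b → G t ^ n * g t = -(G t ^ n * deriv G t) := by
    filter_upwards [hg.ae_hasDerivAt_integral] with t ht htab
    rw [hG_symm, (ht (uIoc_subset_uIcc htab) b right_mem_uIcc).neg.deriv]
    ring
  rw [integral_congr_ae hderiv, intervalIntegral.integral_neg, hG.integral_pow_mul_deriv]
  simp only [G, integral_same, zero_pow n.succ_ne_zero]
  ring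

theorem exists_abs_integral_eq_mul_of_nonneg {g : ℝ → ℝ} (hg₀ : ∀ t, 0 ≤ g t) (a b : ℝ) :
    ∃ σ : ℝ, |σ| = 1 ∧
      ∀ t ∈ uIcc a b, |∫ s in t..b, g s| = σ * ∫ s in t..b, g s := by
  rcases le_total a b with hab | hba
  · refine ⟨1, abs_one, fun t ht => ?_⟩
    rw [uIcc_of_le hab] at ht
    rw [one_mul, abs_of_nonneg (integral_nonneg ht.2 fun s _ => hg₀ s)]
  · refine ⟨-1, by simp, fun t ht => ?_⟩
    rw [uIcc_of_ge hba] at ht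
    rw [integral_symm, abs_neg, neg_one_mul, neg_neg,
      abs_of_nonneg (integral_nonneg ht.1 fun s _ => hg₀ s)]

theorem abs_integral_abs_pow_integral_mul {g : ℝ → ℝ} {a b : ℝ}
    (hg : IntervalIntegrable g volume a b) (hg₀ : ∀ t, 0 ≤ g t) (n : ℕ) :
    |∫ t in a..b, |∫ s in t..b, g s| ^ n * g t| =
      |∫ s in a..b, g s| ^ (n + 1) / (n + 1) := by
  obtain ⟨σ, hσ, habs⟩ := exists_abs_integral_eq_mul_of_nonneg hg₀ a b
  have hcongr : EqOn (fun t => |∫ s in t..b, g s| ^ n * g t)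
      (fun t => σ ^ n * ((∫ s in t..b, g s) ^ n * g t)) (uIcc a b) := fun t ht => by
    simp only [habs t ht]
    ring
  rw [integral_congr hcongr, intervalIntegral.integral_const_mul, integral_pow_integral_mul hg,
    abs_mul, abs_pow, hσ, one_pow, one_mul, abs_div, abs_pow,
    abs_of_pos (by positivity : (0 : ℝ) < n + 1)]

theorem statement0_general
    (V : ℝ → ℝ) (hV : Integrable V)
    (x₀ x : ℝ)
    (F : ℝ → ℝ) (hF : ∀ y, F y = abs (∫ t in y..x₀, |V t|))
    (n : ℕ) (f : ℝ → ℂ)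
    (hbound : ∀ y ∈ Set.uIcc x x₀, ‖f y‖ ≤ F y ^ n / n.factorial) :
    ‖∫ t in x..x₀, f t * (V t : ℂ)‖ ≤ F x ^ (n + 1) / (n + 1).factorial := by
  have hF_cont : ContinuousOn F (uIcc x x₀) := by
    rw [funext hF]
    exact (continuousOn_primitive_interval_left hV.abs.integrableOn).abs
  have hpointwise : ∀ t ∈ Ι x x₀, ‖f t * (V t : ℂ)‖ ≤ F t ^ n / n.factorial * |V t| := by
    intro t ht
    rw [norm_mul, Complex.norm_real, Real.norm_eq_abs]
    exact mul_le_mul_of_nonneg_right (hbound t (uIoc_subset_uIcc ht)) (abs_nonneg _)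
  calc ‖∫ t in x..x₀, f t * (V t : ℂ)‖
      ≤ |∫ t in x..x₀, F t ^ n / n.factorial * (|V t|)| :=
        norm_integral_le_abs_of_norm_le (ae_restrict_of_forall_mem measurableSet_uIoc hpointwise)
          (hV.abs.intervalIntegrable.continuousOn_mul ((hF_cont.pow n).div_const _))
    _ = |∫ t in x..x₀, |∫ s in t..x₀, (|V s|)| ^ n * (|V t|)| / n.factorial := by
        simp only [hF, div_mul_eq_mul_div, intervalIntegral.integral_div, abs_div, Nat.abs_cast]
    _ = F x ^ (n + 1) / (n + 1).factorial := by
        rw [abs_integral_abs_pow_integral_mul hV.abs.intervalIntegrable (fun t => abs_nonneg _),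
          ← hF, Nat.factorial_succ]
        push_cast
        field_simp

/-- If `V` is Lebesgue integrable, `x ≠ x₀`,
`F y = |∫_y^{x₀} |V t| dt|`, and `f` is continuous on the closed interval with
endpoints `x, x₀` with `|f y| ≤ F y ^ n / n!` there, then
`|∫_x^{x₀} f t * V t dt| ≤ F x ^ (n+1) / (n+1)!`. -/
theorem statement0
    (V : ℝ → ℝ) (hV : Integrable V)
    (x₀ x : ℝ) (hx : x ≠ x₀)
    (F : ℝ → ℝ) (hF : ∀ y, F y = abs (∫ t in y..x₀, |V t|))
    (n : ℕ) (f : ℝ → ℂ)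
    (hf : ContinuousOn f (Set.uIcc x x₀))
    (hbound : ∀ y ∈ Set.uIcc x x₀, ‖f y‖ ≤ F y ^ n / n.factorial) :
    ‖∫ t in x..x₀, f t * (V t : ℂ)‖ ≤ F x ^ (n + 1) / (n + 1).factorial :=
  statement0_general V hV x₀ x F hF n f hbound
end

section
/- For every ζ ∈ Ū the Jost integral equation at ζ has exactly one continuous solution b : (−∞, b] → ℂ, and this solution satisfies |b(x)| ≤ exp((b − x)·∫_x^b |V(t)| dt) for every x ≤ b. -/
/-!
Picard iteration for the Volterra operator `(K h)(x) = ∫_x^b κ_ζ(t - x) V(t) h(t) dt`.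
On the closed upper half-plane `|κ_ζ(s)| ≤ s` for `s ≥ 0`, because `|e^z - 1| ≤ |z|` when
`Re z ≤ 0`. Writing `F(x) = ∫_x^b |V|`, the identity `∫_x^b |V| F^n = F(x)^(n+1) / (n+1)` makes
`K` turn a bound `C (L F)^n / n!` on `[x, b]` into `C (L F)^(n+1) / (n+1)!` whenever `b - x ≤ L`.
Hence the Neumann series `∑ Kⁿ 1` converges locally uniformly to a continuous solution bounded by
`exp((b - x) F(x))`; the difference `h` of two solutions satisfies `h = K h`, so if `‖h‖ ≤ C` on
`[x, b]` then `‖h‖ ≤ C ((b - x) F)^n / n! → 0` there.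
-/

open MeasureTheory intervalIntegral

/-- The kernel `κ_ζ(s) = (e^{2iζs} − 1)/(2iζ)` for `ζ ≠ 0`, and `κ₀(s) = s`. -/
noncomputable def kappa (ζ : ℂ) (s : ℝ) : ℂ :=
  if ζ = 0 then (s : ℂ)
  else (Complex.exp (2 * Complex.I * ζ * s) - 1) / (2 * Complex.I * ζ)

open Set Filter Topology Nat

lemma Complex.norm_exp_sub_one_le_of_re_nonpos {z : ℂ} (hz : z.re ≤ 0) :
    ‖exp z - 1‖ ≤ ‖z‖ := by
  have h := (convex_halfSpace_re_le 0).norm_image_sub_le_of_norm_hasDerivWithin_le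
    (f := exp) (C := 1) (fun w _ => (hasDerivAt_exp w).hasDerivWithinAt)
    (fun w hw => by simpa [norm_exp] using hw) (x := 0) (y := z) (by simp) hz
  simpa using h

lemma kappa_zero_right (ζ : ℂ) : kappa ζ 0 = 0 := by
  unfold kappa; split_ifs <;> simp

lemma continuous_kappa (ζ : ℂ) : Continuous (kappa ζ) := by
  unfold kappa; split_ifs <;> fun_prop

lemma norm_kappa_le {ζ : ℂ} (hζ : 0 ≤ ζ.im) {s : ℝ} (hs : 0 ≤ s) : ‖kappa ζ s‖ ≤ s := by
  unfold kappa
  split_ifs with hζ0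
  · simp [abs_of_nonneg hs]
  · have hc : 0 < ‖2 * Complex.I * ζ‖ := by simp [hζ0]
    have hre : (2 * Complex.I * ζ * s).re ≤ 0 := by
      simpa [Complex.mul_re, Complex.mul_im] using mul_nonneg (mul_nonneg zero_le_two hζ) hs
    rw [norm_div, div_le_iff₀ hc]
    calc _ ≤ ‖2 * Complex.I * ζ * s‖ := Complex.norm_exp_sub_one_le_of_re_nonpos hre
      _ = s * ‖2 * Complex.I * ζ‖ := by
        rw [norm_mul, Complex.norm_real, Real.norm_of_nonneg hs, mul_comm]

lemma AbsolutelyContinuousOnInterval.fun_pow_succ {f : ℝ → ℝ} {a b : ℝ}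
    (hf : AbsolutelyContinuousOnInterval f a b) (n : ℕ) :
    AbsolutelyContinuousOnInterval (fun t => f t ^ (n + 1)) a b := by
  induction n with
  | zero => simpa using hf
  | succ n ih => simpa only [pow_succ] using ih.fun_mul hf

lemma integral_mul_pow_integral {w : ℝ → ℝ} {x b : ℝ} (hw : IntervalIntegrable w volume x b)
    (n : ℕ) :
    ∫ t in x..b, w t * (∫ s in t..b, w s) ^ n = (∫ t in x..b, w t) ^ (n + 1) / (n + 1) := by
  have hac : AbsolutelyContinuousOnInterval (fun t => (∫ s in t..b, w s) ^ (n + 1)) x b := by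
    simp only [integral_symm b]
    exact (hw.absolutelyContinuousOnInterval_intervalIntegral right_mem_uIcc).neg.fun_pow_succ n
  have hderiv : ∀ᵐ t, t ∈ uIoc x b → deriv (fun t => (∫ s in t..b, w s) ^ (n + 1)) t
      = -((n + 1) * (w t * (∫ s in t..b, w s) ^ n)) := by
    filter_upwards [hw.ae_hasDerivAt_integral] with t ht htI
    have hF : HasDerivAt (fun t => ∫ s in t..b, w s) (-w t) t :=
      (ht (uIoc_subset_uIcc htI) b right_mem_uIcc).neg.congr_of_eventuallyEq
        (.of_forall fun u => integral_symm b u)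
    rw [(hF.fun_pow (n + 1)).deriv]
    push_cast
    ring
  have hftc := hac.integral_deriv_eq_sub
  rw [integral_congr_ae hderiv, intervalIntegral.integral_neg, intervalIntegral.integral_const_mul,
    integral_same, zero_pow n.succ_ne_zero] at hftc
  field_simp
  linarith

lemma IntervalIntegrable.ofReal {f : ℝ → ℝ} {a b : ℝ} {μ : Measure ℝ}
    (hf : IntervalIntegrable f μ a b) : IntervalIntegrable (fun t => (f t : ℂ)) μ a b :=
  ⟨hf.1.ofReal, hf.2.ofReal⟩

lemma continuousOn_integral_left {f : ℝ → ℝ} {x b : ℝ} (hf : IntervalIntegrable f volume x b) :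
    ContinuousOn (fun t => ∫ s in t..b, f s) (uIcc x b) := by
  simp only [integral_symm b]
  exact (continuousOn_primitive_interval' hf right_mem_uIcc).neg

lemma continuousOn_Iic_of_forall_continuousOn_Icc {α : Type*} [TopologicalSpace α] {f : ℝ → α}
    {b : ℝ} (hf : ∀ c < b, ContinuousOn f (Icc c b)) : ContinuousOn f (Iic b) :=
  continuousOn_of_locally_continuousOn fun x hx =>
    ⟨Ioi (x - 1), isOpen_Ioi, by simp,
      (hf (x - 1) (by linarith [mem_Iic.1 hx])).mono fun _ hy => ⟨hy.2.le, hy.1⟩⟩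

lemma continuousOn_integral_comp_sub_mul {k : ℝ → ℂ} (hk : Continuous k) (hk0 : k 0 = 0)
    {g : ℝ → ℂ} {c b : ℝ} (hg : IntervalIntegrable g volume c b) :
    ContinuousOn (fun x => ∫ t in x..b, k (t - x) * g t) (Icc c b) := by
  set K : ℝ → ℝ → ℂ := fun x t => k (max (t - x) 0) * g t
  have hK : ∀ x, Continuous fun t => k (max (t - x) 0) := fun x => by fun_prop
  have hKint : ∀ x {u v}, uIcc u v ⊆ uIcc c b → IntervalIntegrable (K x) volume u v :=
    fun x _ _ huv => (hg.mono_set huv).continuousOn_mul (hK x).continuousOn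
  -- as `k 0 = 0`, the moving lower limit `x` can be replaced by the fixed one `c`
  have hsplit : ∀ x ∈ Icc c b, ∫ t in x..b, k (t - x) * g t = ∫ t in c..b, K x t := by
    intro x hx
    have hx' : x ∈ uIcc c b := Icc_subset_uIcc hx
    rw [← integral_add_adjacent_intervals (b := x) (hKint x (uIcc_subset_uIcc_left hx'))
      (hKint x (uIcc_subset_uIcc_right hx'))]
    have hleft : ∫ t in c..x, K x t = 0 := by
      refine (integral_congr fun t ht => ?_).trans integral_zero
      rw [uIcc_of_le hx.1] at ht
      simp [K, max_eq_right (sub_nonpos.2 ht.2), hk0]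
    rw [hleft, zero_add]
    refine integral_congr fun t ht => ?_
    rw [uIcc_of_le hx.2] at ht
    simp [K, max_eq_left (sub_nonneg.2 ht.1)]
  obtain ⟨M, hM⟩ := isCompact_Icc.exists_bound_of_continuousOn
    (hk.continuousOn (s := Icc 0 (b - c)))
  refine ContinuousOn.congr (fun x₀ _ => ?_) hsplit
  refine continuousWithinAt_of_dominated_interval (bound := fun t => M * ‖g t‖)
    (.of_forall fun x => (hKint x Subset.rfl).def'.aestronglyMeasurable) ?_ (hg.norm.const_mul M)
    (.of_forall fun t _ => (by fun_prop : Continuous fun x => K x t).continuousWithinAt)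
  filter_upwards [self_mem_nhdsWithin] with x hx
  refine .of_forall fun t ht => ?_
  rw [uIoc_of_le (hx.1.trans hx.2)] at ht
  rw [norm_mul]
  gcongr
  exact hM _ ⟨le_max_right _ _, max_le (by linarith [ht.2, hx.1]) (by linarith [hx.1, hx.2])⟩

section Jost

variable {ζ : ℂ} {V : ℝ → ℝ} {b : ℝ}

noncomputable def jostOp (ζ : ℂ) (V : ℝ → ℝ) (b : ℝ) (h : ℝ → ℂ) (x : ℝ) : ℂ :=
  ∫ t in x..b, kappa ζ (t - x) * (V t : ℂ) * h t

lemma intervalIntegrable_jostOp_integrand {h : ℝ → ℂ} {x : ℝ}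
    (hV : IntervalIntegrable V volume x b) (hh : ContinuousOn h (uIcc x b)) :
    IntervalIntegrable (fun t => kappa ζ (t - x) * (V t : ℂ) * h t) volume x b := by
  have hk : Continuous fun t => kappa ζ (t - x) :=
    (continuous_kappa ζ).comp (continuous_sub_right x)
  exact (hV.ofReal.continuousOn_mul hk.continuousOn).mul_continuousOn hh

lemma continuousOn_jostOp (hV : ∀ c, IntervalIntegrable V volume c b) {h : ℝ → ℂ}
    (hh : ContinuousOn h (Iic b)) : ContinuousOn (jostOp ζ V b h) (Iic b) := by
  refine continuousOn_Iic_of_forall_continuousOn_Icc fun c hc => ?_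
  have hg := (hV c).ofReal.mul_continuousOn
    (hh.mono (by rw [uIcc_of_le hc.le]; exact Icc_subset_Iic_self))
  unfold jostOp
  simpa only [mul_assoc] using
    continuousOn_integral_comp_sub_mul (continuous_kappa ζ) (kappa_zero_right ζ) hg

lemma jostOp_sub {g h : ℝ → ℂ} {x : ℝ} (hx : x ≤ b) (hV : IntervalIntegrable V volume x b)
    (hg : ContinuousOn g (Iic b)) (hh : ContinuousOn h (Iic b)) :
    jostOp ζ V b (g - h) x = jostOp ζ V b g x - jostOp ζ V b h x := by
  have hsub : uIcc x b ⊆ Iic b := by rw [uIcc_of_le hx]; exact Icc_subset_Iic_self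
  rw [jostOp, jostOp, jostOp,
    ← integral_sub (intervalIntegrable_jostOp_integrand hV (hg.mono hsub))
      (intervalIntegrable_jostOp_integrand hV (hh.mono hsub))]
  simp only [Pi.sub_apply, mul_sub]

lemma norm_jostOp_le (hζ : 0 ≤ ζ.im) {h : ℝ → ℂ} {x L C : ℝ} {n : ℕ}
    (hV : IntervalIntegrable V volume x b) (hx : x ≤ b) (hL : b - x ≤ L)
    (hh : ∀ t ∈ Icc x b, ‖h t‖ ≤ C * (L * ∫ s in t..b, |V s|) ^ n / n !) :
    ‖jostOp ζ V b h x‖ ≤ C * (L * ∫ s in x..b, |V s|) ^ (n + 1) / (n + 1)! := by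
  have hbound : IntervalIntegrable
      (fun t => C * L ^ (n + 1) / n ! * (|V t| * (∫ s in t..b, |V s|) ^ n)) volume x b :=
    (hV.abs.mul_continuousOn ((continuousOn_integral_left hV.abs).pow n)).const_mul _
  calc ‖jostOp ζ V b h x‖
      ≤ ∫ t in x..b, C * L ^ (n + 1) / n ! * (|V t| * (∫ s in t..b, |V s|) ^ n) := by
        refine norm_integral_le_of_norm_le hx (.of_forall fun t ht => ?_) hbound
        have hk : ‖kappa ζ (t - x)‖ ≤ L :=
          (norm_kappa_le hζ (by linarith [ht.1])).trans (by linarith [ht.2])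
        calc ‖kappa ζ (t - x) * (V t : ℂ) * h t‖ = ‖kappa ζ (t - x)‖ * |V t| * ‖h t‖ := by
              rw [norm_mul, norm_mul, Complex.norm_real, Real.norm_eq_abs]
          _ ≤ L * |V t| * (C * (L * ∫ s in t..b, |V s|) ^ n / n !) := by
              gcongr
              · exact mul_nonneg (by linarith) (abs_nonneg _)
              · exact hh t (Ioc_subset_Icc_self ht)
          _ = _ := by ring
    _ = C * (L * ∫ s in x..b, |V s|) ^ (n + 1) / (n + 1)! := by
        rw [intervalIntegral.integral_const_mul, integral_mul_pow_integral hV.abs, factorial_succ]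
        push_cast
        field_simp
        ring

noncomputable def jostGrowth (V : ℝ → ℝ) (b x : ℝ) : ℝ := (b - x) * ∫ t in x..b, |V t|

lemma jostGrowth_nonneg {x : ℝ} (hx : x ≤ b) : 0 ≤ jostGrowth V b x :=
  mul_nonneg (sub_nonneg.2 hx) (integral_nonneg hx fun _ _ => abs_nonneg _)

lemma jostGrowth_le {c x : ℝ} (hV : IntervalIntegrable V volume c b) (hcx : c ≤ x) (hxb : x ≤ b) :
    jostGrowth V b x ≤ jostGrowth V b c :=
  mul_le_mul (by linarith)
    (integral_mono_interval hcx hxb le_rfl (.of_forall fun _ => abs_nonneg _) hV.abs)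
    (integral_nonneg hxb fun _ _ => abs_nonneg _) (by linarith)

noncomputable def jostIterate (ζ : ℂ) (V : ℝ → ℝ) (b : ℝ) : ℕ → ℝ → ℂ
  | 0 => fun _ => 1
  | n + 1 => jostOp ζ V b (jostIterate ζ V b n)

lemma continuousOn_jostIterate (hV : ∀ c, IntervalIntegrable V volume c b) :
    ∀ n, ContinuousOn (jostIterate ζ V b n) (Iic b)
  | 0 => continuousOn_const
  | n + 1 => continuousOn_jostOp hV (continuousOn_jostIterate hV n)

lemma norm_jostIterate_le (hζ : 0 ≤ ζ.im) (hV : ∀ c, IntervalIntegrable V volume c b) (n : ℕ)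
    {x : ℝ} (hx : x ≤ b) : ‖jostIterate ζ V b n x‖ ≤ jostGrowth V b x ^ n / n ! := by
  induction n generalizing x with
  | zero => simp [jostIterate]
  | succ n ih =>
    have hstep : ∀ t ∈ Icc x b,
        ‖jostIterate ζ V b n t‖ ≤ 1 * ((b - x) * ∫ s in t..b, |V s|) ^ n / n ! := by
      intro t ht
      rw [one_mul]
      refine (ih ht.2).trans ?_
      have hF : 0 ≤ ∫ s in t..b, |V s| := integral_nonneg ht.2 fun _ _ => abs_nonneg _
      unfold jostGrowth
      gcongr
      · exact mul_nonneg (sub_nonneg.2 ht.2) hF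
      · exact ht.1
    have h := norm_jostOp_le hζ (hV x) hx le_rfl hstep
    rwa [one_mul] at h

lemma summable_jostIterate (hζ : 0 ≤ ζ.im) (hV : ∀ c, IntervalIntegrable V volume c b) {x : ℝ}
    (hx : x ≤ b) : Summable fun n => jostIterate ζ V b n x :=
  .of_norm_bounded (Real.summable_pow_div_factorial _) fun n => norm_jostIterate_le hζ hV n hx

noncomputable def jostSolution (ζ : ℂ) (V : ℝ → ℝ) (b x : ℝ) : ℂ := ∑' n, jostIterate ζ V b n x

lemma norm_jostSolution_le (hζ : 0 ≤ ζ.im) (hV : ∀ c, IntervalIntegrable V volume c b) {x : ℝ}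
    (hx : x ≤ b) : ‖jostSolution ζ V b x‖ ≤ Real.exp (jostGrowth V b x) :=
  tsum_of_norm_bounded (Real.exp_eq_exp_ℝ ▸ NormedSpace.expSeries_div_hasSum_exp _)
    fun n => norm_jostIterate_le hζ hV n hx

lemma continuousOn_jostSolution (hζ : 0 ≤ ζ.im) (hV : ∀ c, IntervalIntegrable V volume c b) :
    ContinuousOn (jostSolution ζ V b) (Iic b) :=
  continuousOn_Iic_of_forall_continuousOn_Icc fun c _ =>
    continuousOn_tsum (fun n => (continuousOn_jostIterate hV n).mono Icc_subset_Iic_self)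
      (Real.summable_pow_div_factorial (jostGrowth V b c)) fun n x hx =>
        (norm_jostIterate_le hζ hV n hx.2).trans <| by
          gcongr
          exacts [jostGrowth_nonneg hx.2, jostGrowth_le (hV c) hx.1 hx.2]

lemma jostSolution_eq (hζ : 0 ≤ ζ.im) (hV : ∀ c, IntervalIntegrable V volume c b) {x : ℝ}
    (hx : x ≤ b) : jostSolution ζ V b x = 1 + jostOp ζ V b (jostSolution ζ V b) x := by
  have hsub : uIcc x b ⊆ Iic b := by rw [uIcc_of_le hx]; exact Icc_subset_Iic_self
  have hsum : HasSum (fun n => jostOp ζ V b (jostIterate ζ V b n) x)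
      (jostOp ζ V b (jostSolution ζ V b) x) := by
    refine hasSum_integral_of_dominated_convergence
      (fun n t => |V t| * ((b - x) * (jostGrowth V b x ^ n / n !)))
      (fun n => (intervalIntegrable_jostOp_integrand (hV x)
        ((continuousOn_jostIterate hV n).mono hsub)).def'.aestronglyMeasurable)
      (fun n => .of_forall fun t ht => ?_)
      (.of_forall fun t _ => ((Real.summable_pow_div_factorial _).mul_left _).mul_left _) ?_
      (.of_forall fun t ht => ?_)
    · rw [uIoc_of_le hx] at ht
      have hk : ‖kappa ζ (t - x)‖ ≤ b - x :=
        (norm_kappa_le hζ (by linarith [ht.1])).trans (by linarith [ht.2])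
      rw [norm_mul, norm_mul, Complex.norm_real, Real.norm_eq_abs]
      calc ‖kappa ζ (t - x)‖ * |V t| * ‖jostIterate ζ V b n t‖
          ≤ (b - x) * |V t| * (jostGrowth V b x ^ n / n !) := by
            gcongr
            refine (norm_jostIterate_le hζ hV n ht.2).trans ?_
            gcongr
            exacts [jostGrowth_nonneg ht.2, jostGrowth_le (hV x) ht.1.le ht.2]
        _ = _ := by ring
    · simp_rw [tsum_mul_left]
      exact (hV x).abs.mul_const _
    · rw [uIoc_of_le hx] at ht
      exact (summable_jostIterate hζ hV ht.2).hasSum.mul_left _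
  rw [jostSolution, (summable_jostIterate hζ hV hx).tsum_eq_zero_add, ← hsum.tsum_eq]
  rfl

lemma eqOn_zero_of_eq_jostOp (hζ : 0 ≤ ζ.im) (hV : ∀ c, IntervalIntegrable V volume c b)
    {h : ℝ → ℂ} (hh : ContinuousOn h (Iic b)) (heq : ∀ x ≤ b, h x = jostOp ζ V b h x) :
    EqOn h 0 (Iic b) := by
  intro x hx
  obtain ⟨C, hC⟩ :=
    isCompact_Icc.exists_bound_of_continuousOn (hh.mono (Icc_subset_Iic_self (a := x)))
  have hbound : ∀ n, ∀ t ∈ Icc x b, ‖h t‖ ≤ C * ((b - x) * ∫ s in t..b, |V s|) ^ n / n ! := by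
    intro n
    induction n with
    | zero => simpa using hC
    | succ n ih =>
      intro t ht
      rw [heq t ht.2]
      exact norm_jostOp_le hζ (hV t) ht.2 (by linarith [ht.1]) fun s hs =>
        ih s ⟨ht.1.trans hs.1, hs.2⟩
  have hlim : Tendsto (fun n => C * (jostGrowth V b x ^ n / n !)) atTop (𝓝 0) := by
    simpa using (FloorSemiring.tendsto_pow_div_factorial_atTop (jostGrowth V b x)).const_mul C
  refine norm_le_zero_iff.1 (ge_of_tendsto hlim (.of_forall fun n => ?_))
  rw [← mul_div_assoc]
  exact hbound n x ⟨le_rfl, hx⟩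

end Jost

theorem statement3_general
    (b : ℝ)
    (V : ℝ → ℝ) (hV : Integrable V)
    (ζ : ℂ) (hζ : 0 ≤ ζ.im) :
    ∃ f : ℝ → ℂ,
      (ContinuousOn f (Set.Iic b) ∧
        ∀ x ≤ b, f x = 1 + ∫ t in x..b, kappa ζ (t - x) * (V t : ℂ) * f t) ∧
      (∀ x ≤ b,
        ‖f x‖ ≤ Real.exp ((b - x) * ∫ t in x..b, |V t|)) ∧
      (∀ g : ℝ → ℂ, ContinuousOn g (Set.Iic b) →
        (∀ x ≤ b, g x = 1 + ∫ t in x..b, kappa ζ (t - x) * (V t : ℂ) * g t) →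
        Set.EqOn g f (Set.Iic b)) := by
  have hVb : ∀ c, IntervalIntegrable V volume c b := fun c => hV.intervalIntegrable
  have hf := continuousOn_jostSolution hζ hVb
  refine ⟨jostSolution ζ V b, ⟨hf, fun x hx => jostSolution_eq hζ hVb hx⟩,
    fun x hx => norm_jostSolution_le hζ hVb hx, fun g hg hgeq x hx => ?_⟩
  have hgeq' : ∀ y ≤ b, g y = 1 + jostOp ζ V b g y := hgeq
  have hzero := eqOn_zero_of_eq_jostOp hζ hVb (hg.sub hf) fun y hy => by
    rw [jostOp_sub hy (hVb y) hg hf, Pi.sub_apply, hgeq' y hy, jostSolution_eq hζ hVb hy]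
    ring
  exact sub_eq_zero.1 (hzero hx)

/-- For every `ζ` in the closed upper half-plane, the Jost
integral equation `f(x) = 1 + ∫_x^b κ_ζ(t−x) V(t) f(t) dt` has exactly one
continuous solution on `(−∞, b]`, and it satisfies
`|f(x)| ≤ exp((b − x) ∫_x^b |V|)` for all `x ≤ b`. -/
theorem statement3
    (a b : ℝ) (hab : a < b)
    (V : ℝ → ℝ) (hV : Integrable V)
    (hVsupp : ∀ x, x ∉ Set.Icc a b → V x = 0)
    (ζ : ℂ) (hζ : 0 ≤ ζ.im) :
    ∃ f : ℝ → ℂ,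
      (ContinuousOn f (Set.Iic b) ∧
        ∀ x ≤ b, f x = 1 + ∫ t in x..b, kappa ζ (t - x) * (V t : ℂ) * f t) ∧
      (∀ x ≤ b,
        ‖f x‖ ≤ Real.exp ((b - x) * ∫ t in x..b, |V t|)) ∧
      (∀ g : ℝ → ℂ, ContinuousOn g (Set.Iic b) →
        (∀ x ≤ b, g x = 1 + ∫ t in x..b, kappa ζ (t - x) * (V t : ℂ) * g t) →
        Set.EqOn g f (Set.Iic b)) :=
  statement3_general b V hV ζ hζ
end

section
/- Assume in addition that V(x) ≥ 0 for a.e. x. Then the unique continuous solution b(·,0) : (−∞,b] → ℂ of the Jost integral equation at ζ = 0, i.e. of b(x) = 1 + ∫_x^b (t − x)·V(t)·b(t) dt, is real-valued and satisfies b(x,0) ≥ 1 for every x ≤ b. -/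
/-!
Both conclusions come from a Grönwall lemma for the Volterra inequality
`u x ≤ K * ∫ t in x..b, W t * u t` with `u ≥ 0` continuous and `W` integrable on `[c, b]`:
choosing `r` so that `K * ∫ |W| ≤ 1/2` over every interval of length `r` (uniform absolute
continuity of the integral), the maximum of `u` on a strip of width `r` next to a region where
`u = 0` is at most half of itself, so `u` vanishes strip by strip.

Fix `x ≤ b`. On `[x, b]` the kernel `t - y` is bounded by `b - x`, so `|Im f|` satisfies the
inequality with `W = |V|`, `K = b - x`. Since `V ≥ 0` and `-Re f ≤ (1 - Re f)⁺`, the real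
equation gives the same inequality for `(1 - Re f)⁺`. Hence `Im f = 0` and `Re f ≥ 1`.
-/

open MeasureTheory intervalIntegral Set

lemma exists_pos_forall_integral_abs_le {W : ℝ → ℝ} {c b ε : ℝ}
    (hW : IntegrableOn W (Icc c b)) (hε : 0 < ε) :
    ∃ r > 0, ∀ x ∈ Icc c b, ∀ y ∈ Icc c b, x ≤ y → y - x ≤ r →
      ∫ t in x..y, |W t| ≤ ε := by
  rcases lt_or_ge b c with hbc | hcb
  · exact ⟨1, one_pos, fun x hx _ _ _ _ => absurd (hx.1.trans hx.2) hbc.not_ge⟩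
  have hW' : IntegrableOn (fun t => |W t|) (uIcc c b) := by
    rw [uIcc_of_le hcb]; exact hW.abs
  have hP := isCompact_uIcc.uniformContinuousOn_of_continuous
    (continuousOn_primitive_interval hW')
  rw [uIcc_of_le hcb] at hP hW'
  obtain ⟨r, hr, hr'⟩ := Metric.uniformContinuousOn_iff_le.1 hP ε hε
  refine ⟨r, hr, fun x hx y hy hxy hyx => ?_⟩
  have hdist := hr' y hy x hx (by rw [Real.dist_eq, abs_of_nonneg (by linarith)]; exact hyx)
  have hint : ∀ z ∈ Icc c b, IntervalIntegrable (fun t => |W t|) volume c z := fun z hz =>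
    (intervalIntegrable_iff_integrableOn_Icc_of_le hz.1).2
      (hW'.mono_set (Icc_subset_Icc_right hz.2))
  rwa [Real.dist_eq, integral_interval_sub_left (hint y hy) (hint x hx),
    abs_of_nonneg (integral_nonneg hxy fun _ _ => abs_nonneg _)] at hdist

lemma intervalIntegrable_mul_of_integrableOn_Icc {R : Type*} [NormedRing R] {W u : ℝ → R}
    {c b : ℝ} (hW : IntegrableOn W (Icc c b)) (hu : ContinuousOn u (Icc c b)) {x y : ℝ}
    (hx : x ∈ Icc c b) (hy : y ∈ Icc c b) :
    IntervalIntegrable (fun t => W t * u t) volume x y :=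
  ((hW.mul_continuousOn hu isCompact_Icc).mono_set (uIcc_subset_Icc hx hy)).intervalIntegrable

section Gronwall

variable {W u : ℝ → ℝ} {K c b : ℝ}

lemma eqOn_zero_of_le_mul_integral_of_small (hK : 0 ≤ K) (hW : IntegrableOn W (Icc c b))
    (hu : ContinuousOn u (Icc c b)) (hu0 : ∀ x ∈ Icc c b, 0 ≤ u x)
    (hub : ∀ x ∈ Icc c b, u x ≤ K * ∫ t in x..b, W t * u t) {d e : ℝ} (hce : c ≤ e)
    (hed : e ≤ d) (hdb : d ≤ b) (hsmall : ∀ x ∈ Icc e d, K * ∫ t in x..d, |W t| ≤ 1 / 2)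
    (hzero : EqOn u 0 (Ioc d b)) :
    EqOn u 0 (Icc e b) := by
  have hsub : Icc e d ⊆ Icc c b := Icc_subset_Icc hce hdb
  obtain ⟨z, hz, hmax⟩ := isCompact_Icc.exists_isMaxOn (nonempty_Icc.2 hed) (hu.mono hsub)
  have hd : d ∈ Icc c b := ⟨hce.trans hed, hdb⟩
  have hhalf : ∀ x ∈ Icc e d, u x ≤ u z / 2 := by
    intro x hx
    have hWu := intervalIntegrable_mul_of_integrableOn_Icc hW hu (hsub hx) hd
    have hWM : IntervalIntegrable (fun t => |W t| * u z) volume x d :=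
      (IntegrableOn.mono_set hW.abs (uIcc_subset_Icc (hsub hx) hd)).intervalIntegrable.mul_const _
    have htail : ∫ t in d..b, W t * u t = 0 := by
      rw [integral_of_le hdb]
      exact setIntegral_eq_zero_of_forall_eq_zero fun t ht => by simp [hzero ht]
    calc u x ≤ K * ∫ t in x..b, W t * u t := hub x (hsub hx)
      _ = K * ∫ t in x..d, W t * u t := by
        rw [← integral_add_adjacent_intervals hWu
          (intervalIntegrable_mul_of_integrableOn_Icc hW hu hd ⟨hd.1.trans hdb, le_rfl⟩),
          htail, add_zero]
      _ ≤ K * ∫ t in x..d, |W t| * u z := by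
        refine mul_le_mul_of_nonneg_left (integral_mono_on hx.2 hWu hWM fun t ht => ?_) hK
        exact mul_le_mul (le_abs_self _) (hmax ⟨hx.1.trans ht.1, ht.2⟩)
          (hu0 t (hsub ⟨hx.1.trans ht.1, ht.2⟩)) (abs_nonneg _)
      _ = (K * ∫ t in x..d, |W t|) * u z := by rw [intervalIntegral.integral_mul_const, mul_assoc]
      _ ≤ 1 / 2 * u z := mul_le_mul_of_nonneg_right (hsmall x hx) (hu0 z (hsub hz))
      _ = u z / 2 := by ring
  have hz0 : u z = 0 := le_antisymm (by linarith [hhalf z hz]) (hu0 z (hsub hz))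
  intro x hx
  rcases le_or_gt x d with hxd | hdx
  · exact le_antisymm ((hmax ⟨hx.1, hxd⟩).trans_eq hz0) (hu0 x ⟨hce.trans hx.1, hx.2⟩)
  · exact hzero ⟨hdx, hx.2⟩

theorem eqOn_zero_of_le_mul_integral (hK : 0 ≤ K) (hW : IntegrableOn W (Icc c b))
    (hu : ContinuousOn u (Icc c b)) (hu0 : ∀ x ∈ Icc c b, 0 ≤ u x)
    (hub : ∀ x ∈ Icc c b, u x ≤ K * ∫ t in x..b, W t * u t) :
    EqOn u 0 (Icc c b) := by
  rcases lt_or_ge b c with hbc | hcb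
  · simp [Icc_eq_empty_of_lt hbc]
  obtain ⟨r, hr, hsmall⟩ := exists_pos_forall_integral_abs_le hW (ε := 1 / (2 * K + 1))
    (by positivity)
  have hKε : K * (1 / (2 * K + 1)) ≤ 1 / 2 := by
    rw [mul_one_div, div_le_iff₀ (by positivity)]; linarith
  have hstep : ∀ d e, c ≤ e → e ≤ d → d ≤ b → d - e ≤ r → EqOn u 0 (Ioc d b) →
      EqOn u 0 (Icc e b) := fun d e hce hed hdb hder hzero =>
    eqOn_zero_of_le_mul_integral_of_small hK hW hu hu0 hub hce hed hdb
      (fun x hx => (mul_le_mul_of_nonneg_left (hsmall x ⟨hce.trans hx.1, hx.2.trans hdb⟩ d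
        ⟨hce.trans hed, hdb⟩ hx.2 (by linarith [hx.1])) hK).trans hKε) hzero
  have hstrips : ∀ n : ℕ, EqOn u 0 (Icc (max c (b - n * r)) b) := by
    intro n
    induction n with
    | zero => simpa [hcb] using hstep b b hcb le_rfl le_rfl (by simpa using hr.le) (by simp)
    | succ n ih =>
      refine hstep _ _ (le_max_left _ _) (max_le_max le_rfl (by push_cast; linarith))
        (max_le hcb (by linarith [mul_nonneg n.cast_nonneg hr.le])) ?_ (ih.mono Ioc_subset_Icc_self)
      push_cast
      rw [sub_le_iff_le_add]
      exact max_le (by linarith [le_max_left c (b - (n + 1) * r)])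
        (by linarith [le_max_right c (b - (n + 1) * r)])
  obtain ⟨n, hn⟩ := exists_nat_ge ((b - c) / r)
  have hbn : b - n * r ≤ c := by rw [div_le_iff₀ hr] at hn; linarith
  simpa [max_eq_left hbn] using hstrips n

end Gronwall

lemma re_integral_ofReal_mul {k : ℝ → ℝ} {F : ℝ → ℂ} {x y : ℝ}
    (h : IntervalIntegrable (fun t => (k t : ℂ) * F t) volume x y) :
    (∫ t in x..y, (k t : ℂ) * F t).re = ∫ t in x..y, k t * (F t).re := by
  rw [← Complex.reCLM_apply, ← ContinuousLinearMap.intervalIntegral_comp_comm _ h]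
  simp only [Complex.reCLM_apply, Complex.re_ofReal_mul]

lemma im_integral_ofReal_mul {k : ℝ → ℝ} {F : ℝ → ℂ} {x y : ℝ}
    (h : IntervalIntegrable (fun t => (k t : ℂ) * F t) volume x y) :
    (∫ t in x..y, (k t : ℂ) * F t).im = ∫ t in x..y, k t * (F t).im := by
  rw [← Complex.imCLM_apply, ← ContinuousLinearMap.intervalIntegral_comp_comm _ h]
  simp only [Complex.imCLM_apply, Complex.im_ofReal_mul]

section ZeroEnergyJost

variable {V : ℝ → ℝ} {b : ℝ}

lemma integrableOn_sub_mul (hV : Integrable V) (x y : ℝ) :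
    IntegrableOn (fun t => (t - x) * V t) (Icc y b) :=
  IntegrableOn.continuousOn_mul (by fun_prop) hV.integrableOn isCompact_Icc

lemma abs_integral_sub_mul_mul_le (hV : Integrable V) {φ : ℝ → ℝ} {x y : ℝ}
    (hφ : ContinuousOn φ (Icc y b)) (hxy : x ≤ y) (hyb : y ≤ b) :
    |∫ t in y..b, (t - y) * V t * φ t| ≤ (b - x) * ∫ t in y..b, |V t| * |φ t| := by
  have hy : y ∈ Icc y b := ⟨le_rfl, hyb⟩
  have hb : b ∈ Icc y b := ⟨hyb, le_rfl⟩
  calc |∫ t in y..b, (t - y) * V t * φ t| ≤ ∫ t in y..b, |(t - y) * V t * φ t| :=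
        abs_integral_le_integral_abs hyb
    _ ≤ ∫ t in y..b, (b - x) * (|V t| * |φ t|) := by
      refine integral_mono_on hyb
        (intervalIntegrable_mul_of_integrableOn_Icc (integrableOn_sub_mul hV y y) hφ hy hb).abs
        ((intervalIntegrable_mul_of_integrableOn_Icc hV.integrableOn.abs hφ.abs hy hb).const_mul _)
        fun t ht => ?_
      rw [abs_mul, abs_mul, abs_of_nonneg (sub_nonneg.2 ht.1), ← mul_assoc]
      gcongr
      linarith [ht.2]
    _ = (b - x) * ∫ t in y..b, |V t| * |φ t| := integral_const_mul _ _

lemma eq_zero_of_eq_integral_sub_mul_mul (hV : Integrable V) {g : ℝ → ℝ}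
    (hg : ContinuousOn g (Iic b)) (hgeq : ∀ x ≤ b, g x = ∫ t in x..b, (t - x) * V t * g t)
    {x : ℝ} (hx : x ≤ b) : g x = 0 := by
  have hzero := eqOn_zero_of_le_mul_integral (K := b - x) (W := fun t => |V t|)
    (u := fun t => |g t|) (sub_nonneg.2 hx) hV.integrableOn.abs
    (hg.mono Icc_subset_Iic_self).abs (fun _ _ => abs_nonneg _) fun y hy => by
      rw [hgeq y hy.2]
      exact abs_integral_sub_mul_mul_le hV (hg.mono Icc_subset_Iic_self) hy.1 hy.2
  exact abs_eq_zero.1 (hzero ⟨le_rfl, hx⟩)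

lemma max_one_sub_le_mul_integral (hV : Integrable V) (hVnn : ∀ᵐ t, 0 ≤ V t) {h : ℝ → ℝ}
    (hh : ContinuousOn h (Iic b)) (hheq : ∀ x ≤ b, h x = 1 + ∫ t in x..b, (t - x) * V t * h t)
    {x y : ℝ} (hxy : x ≤ y) (hyb : y ≤ b) :
    max (1 - h y) 0 ≤ (b - x) * ∫ t in y..b, |V t| * max (1 - h t) 0 := by
  have hu : ContinuousOn (fun t => max (1 - h t) 0) (Icc y b) :=
    ContinuousOn.sup (continuousOn_const.sub (hh.mono Icc_subset_Iic_self)) continuousOn_const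
  have hy : y ∈ Icc y b := ⟨le_rfl, hyb⟩
  have hb : b ∈ Icc y b := ⟨hyb, le_rfl⟩
  have hK := integrableOn_sub_mul (b := b) hV y y
  refine max_le ?_ (mul_nonneg (sub_nonneg.2 (hxy.trans hyb)) (integral_nonneg hyb fun t _ =>
    mul_nonneg (abs_nonneg _) (le_max_right _ _)))
  calc 1 - h y = ∫ t in y..b, (t - y) * V t * -h t := by
        simp only [hheq y hyb, mul_neg, intervalIntegral.integral_neg]; ring
    _ ≤ ∫ t in y..b, (t - y) * V t * max (1 - h t) 0 := by
      refine integral_mono_ae_restrict hyb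
        (intervalIntegrable_mul_of_integrableOn_Icc hK (hh.mono Icc_subset_Iic_self).neg hy hb)
        (intervalIntegrable_mul_of_integrableOn_Icc hK hu hy hb) ?_
      filter_upwards [ae_restrict_of_ae hVnn, ae_restrict_mem measurableSet_Icc] with t hVt ht
      exact mul_le_mul_of_nonneg_left (by linarith [le_max_left (1 - h t) 0])
        (mul_nonneg (sub_nonneg.2 ht.1) hVt)
    _ ≤ (b - x) * ∫ t in y..b, |V t| * |max (1 - h t) 0| :=
      (le_abs_self _).trans (abs_integral_sub_mul_mul_le hV hu hxy hyb)
    _ = (b - x) * ∫ t in y..b, |V t| * max (1 - h t) 0 := by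
      simp only [abs_of_nonneg (le_max_right _ (0 : ℝ))]

lemma one_le_of_eq_one_add_integral_sub_mul_mul (hV : Integrable V) (hVnn : ∀ᵐ t, 0 ≤ V t)
    {h : ℝ → ℝ} (hh : ContinuousOn h (Iic b))
    (hheq : ∀ x ≤ b, h x = 1 + ∫ t in x..b, (t - x) * V t * h t) {x : ℝ} (hx : x ≤ b) :
    1 ≤ h x := by
  have hzero := eqOn_zero_of_le_mul_integral (K := b - x) (W := fun t => |V t|)
    (u := fun t => max (1 - h t) 0) (sub_nonneg.2 hx) hV.integrableOn.abs
    (ContinuousOn.sup (continuousOn_const.sub (hh.mono Icc_subset_Iic_self)) continuousOn_const)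
    (fun _ _ => le_max_right _ _)
    fun y hy => max_one_sub_le_mul_integral hV hVnn hh hheq hy.1 hy.2
  have h0 : max (1 - h x) 0 = 0 := hzero ⟨le_rfl, hx⟩
  linarith [le_max_left (1 - h x) 0]

variable {f : ℝ → ℂ}

lemma intervalIntegrable_ofReal_sub_mul_mul (hV : Integrable V) (hf : ContinuousOn f (Iic b))
    {x : ℝ} (hx : x ≤ b) :
    IntervalIntegrable (fun t => (((t - x) * V t : ℝ) : ℂ) * f t) volume x b :=
  intervalIntegrable_mul_of_integrableOn_Icc (u := f) (integrableOn_sub_mul hV x x).ofReal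
    (hf.mono Icc_subset_Iic_self) ⟨le_rfl, hx⟩ ⟨hx, le_rfl⟩

lemma jost_eq_ofReal
    (hfeq : ∀ x ≤ b, f x = 1 + ∫ t in x..b, ((t : ℂ) - (x : ℂ)) * (V t : ℂ) * f t)
    {x : ℝ} (hx : x ≤ b) : f x = 1 + ∫ t in x..b, (((t - x) * V t : ℝ) : ℂ) * f t := by
  rw [hfeq x hx]
  push_cast
  rfl

lemma re_eq_one_add_integral_of_jost (hV : Integrable V) (hf : ContinuousOn f (Iic b))
    (hfeq : ∀ x ≤ b, f x = 1 + ∫ t in x..b, ((t : ℂ) - (x : ℂ)) * (V t : ℂ) * f t)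
    {x : ℝ} (hx : x ≤ b) : (f x).re = 1 + ∫ t in x..b, (t - x) * V t * (f t).re := by
  rw [jost_eq_ofReal hfeq hx, Complex.add_re, Complex.one_re,
    re_integral_ofReal_mul (intervalIntegrable_ofReal_sub_mul_mul hV hf hx)]

lemma im_eq_integral_of_jost (hV : Integrable V) (hf : ContinuousOn f (Iic b))
    (hfeq : ∀ x ≤ b, f x = 1 + ∫ t in x..b, ((t : ℂ) - (x : ℂ)) * (V t : ℂ) * f t)
    {x : ℝ} (hx : x ≤ b) : (f x).im = ∫ t in x..b, (t - x) * V t * (f t).im := by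
  rw [jost_eq_ofReal hfeq hx, Complex.add_im, Complex.one_im, zero_add,
    im_integral_ofReal_mul (intervalIntegrable_ofReal_sub_mul_mul hV hf hx)]

end ZeroEnergyJost

theorem statement6_general
    (b : ℝ)
    (V : ℝ → ℝ) (hV : Integrable V)
    (hVpos : ∀ᵐ x : ℝ, 0 ≤ V x)
    (f : ℝ → ℂ)
    (hfcont : ContinuousOn f (Set.Iic b))
    (hfeq : ∀ x ≤ b, f x = 1 + ∫ t in x..b, ((t : ℂ) - (x : ℂ)) * (V t : ℂ) * f t) :
    ∀ x ≤ b, (f x).im = 0 ∧ 1 ≤ (f x).re := fun x hx =>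
  ⟨eq_zero_of_eq_integral_sub_mul_mul hV (Complex.continuous_im.comp_continuousOn hfcont)
      (fun _ hy => im_eq_integral_of_jost hV hfcont hfeq hy) hx,
    one_le_of_eq_one_add_integral_sub_mul_mul hV hVpos
      (Complex.continuous_re.comp_continuousOn hfcont)
      (fun _ hy => re_eq_one_add_integral_of_jost hV hfcont hfeq hy) hx⟩

/-- If moreover `V ≥ 0` a.e., then the (unique) continuous
solution of the zero-energy Jost integral equation
`f(x) = 1 + ∫_x^b (t − x) V(t) f(t) dt` on `(−∞, b]` is real-valued and
satisfies `f(x) ≥ 1` for every `x ≤ b`. -/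
theorem statement6
    (a b : ℝ) (hab : a < b)
    (V : ℝ → ℝ) (hV : Integrable V)
    (hVsupp : ∀ x, x ∉ Set.Icc a b → V x = 0)
    (hVpos : ∀ᵐ x : ℝ, 0 ≤ V x)
    (f : ℝ → ℂ)
    (hfcont : ContinuousOn f (Set.Iic b))
    (hfeq : ∀ x ≤ b, f x = 1 + ∫ t in x..b, ((t : ℂ) - (x : ℂ)) * (V t : ℂ) * f t) :
    ∀ x ≤ b, (f x).im = 0 ∧ 1 ≤ (f x).re :=
  statement6_general b V hV hVpos f hfcont hfeq
end

section
/- Assume in addition that V(x) ≥ 0 for a.e. x and ∫_a^b V(t) dt > 0, and let b(·,0) be the unique continuous solution of the Jost integral equation at ζ = 0. Then the zero-energy Jost function w(0) = ∫_a^b V(t)·b(t,0) dt satisfies w(0) ≥ ∫_a^b V(t) dt > 0; in particular w(0) ≠ 0. -/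
open MeasureTheory intervalIntegral Set Filter Topology

/-!
Write `u` and `v` for the real and imaginary parts of the solution `f`. Since `V` is real, `u`
solves the same Volterra equation and `v` the homogeneous one, with kernel `(t - x) V(t)` of size
at most `W(t) = (b - a) |V(t)|`. The inequality `|v x| ≤ ∫ₓᵇ W |v|` forces `v = 0`: on a short
interval `[x₀, y]` with `∫ W < 1`, beyond which `v` already vanishes, `max |v| ≤ (∫ W) max |v|`,
and continuous induction propagates this down to `a`. Since `V ≥ 0` the kernel is nonnegative, so
`u` stays positive: at the largest `c ∈ [a, b]` with `u c ≤ 0` the equation would give `u c ≥ 1`.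
Hence `u ≥ 1` on `[a, b]`, and `w(0) = ∫ V u ≥ ∫ V`.
-/

theorem eqOn_zero_of_abs_le_integral_of_integral_lt_one {x₀ x : ℝ} {W v : ℝ → ℝ}
    (hW : IntervalIntegrable W volume x₀ x) (hW0 : 0 ≤ W) (hx₀ : x₀ ≤ x)
    (hWsmall : ∫ t in x₀..x, W t < 1) (hv : ContinuousOn v (Icc x₀ x))
    (hbd : ∀ z ∈ Icc x₀ x, |v z| ≤ ∫ t in z..x, W t * |v t|) :
    EqOn v 0 (Icc x₀ x) := by
  obtain ⟨t₀, ht₀, hmax⟩ := isCompact_Icc.exists_isMaxOn (nonempty_Icc.2 hx₀) hv.abs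
  set m := |v t₀|
  have hWv : IntervalIntegrable (fun t => W t * |v t|) volume x₀ x :=
    hW.mul_continuousOn (uIcc_of_le hx₀ ▸ hv.abs)
  have hm_le : m ≤ (∫ t in x₀..x, W t) * m :=
    calc m ≤ ∫ t in t₀..x, W t * |v t| := hbd t₀ ht₀
      _ ≤ ∫ t in x₀..x, W t * |v t| :=
        integral_mono_interval ht₀.1 ht₀.2 le_rfl
          (ae_of_all _ fun t => mul_nonneg (hW0 t) (abs_nonneg _)) hWv
      _ ≤ ∫ t in x₀..x, W t * m :=
        integral_mono_on hx₀ hWv (hW.mul_const m) fun t ht =>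
          mul_le_mul_of_nonneg_left (hmax ht) (hW0 t)
      _ = (∫ t in x₀..x, W t) * m := integral_mul_const m W
  have hm : m = 0 := by nlinarith [abs_nonneg (v t₀)]
  exact fun z hz => abs_nonpos_iff.mp (hm ▸ hmax hz)

theorem exists_mem_Ioo_integral_lt {W : ℝ → ℝ} {c x ε : ℝ} (hW : IntervalIntegrable W volume c x)
    (hcx : c < x) (hε : 0 < ε) : ∃ x₀ ∈ Ioo c x, ∫ t in x₀..x, W t < ε := by
  have hcont : ContinuousWithinAt (fun z => ∫ t in x..z, W t) (Ioo c x) x :=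
    ((continuousOn_primitive_interval' hW right_mem_uIcc) x right_mem_uIcc).mono
      (uIcc_of_le hcx.le ▸ Ioo_subset_Icc_self)
  have hev : ∀ᶠ z in 𝓝[Ioo c x] x, -ε < ∫ t in x..z, W t :=
    hcont.eventually (Ioi_mem_nhds (by simpa using hε))
  have := right_nhdsWithin_Ioo_neBot hcx
  obtain ⟨x₀, hx₀, hmem⟩ := (hev.and self_mem_nhdsWithin).exists
  exact ⟨x₀, hmem, by rw [integral_symm]; linarith⟩

theorem eqOn_zero_of_abs_le_integral {a b : ℝ} {W v : ℝ → ℝ}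
    (hW : IntervalIntegrable W volume a b) (hW0 : 0 ≤ W) (hv : ContinuousOn v (Icc a b))
    (hbd : ∀ x ∈ Icc a b, |v x| ≤ ∫ t in x..b, W t * |v t|) :
    EqOn v 0 (Icc a b) := by
  intro x hx
  have hab : a ≤ b := hx.1.trans hx.2
  have hWv : IntervalIntegrable (fun t => W t * |v t|) volume a b :=
    hW.mul_continuousOn (uIcc_of_le hab ▸ hv.abs)
  have hsub : ∀ {c d}, c ∈ Icc a b → d ∈ Icc a b → uIcc c d ⊆ uIcc a b := fun hc hd =>
    uIcc_subset_uIcc (Icc_subset_uIcc hc) (Icc_subset_uIcc hd)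
  set s := {x | ∀ t ∈ Ioc x b, v t = 0}
  have hs : IsClosed s := by
    have : s = ⋂ t ∈ {t | t ≤ b ∧ v t ≠ 0}, Ici t := by
      ext x; simp only [s, mem_ofPred_eq, mem_Ioc, mem_iInter, mem_Ici, and_imp]
      grind
    rw [this]
    exact isClosed_biInter fun _ _ => isClosed_Ici
  have htail : ∀ y ∈ s, y ≤ b → ∀ z ∈ Icc a y,
      ∫ t in z..b, W t * |v t| = ∫ t in z..y, W t * |v t| := by
    intro y hys hyb z hz
    have hy : y ∈ Icc a b := ⟨hz.1.trans hz.2, hyb⟩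
    rw [← integral_add_adjacent_intervals (hWv.mono_set (hsub ⟨hz.1, hz.2.trans hyb⟩ hy))
      (hWv.mono_set (hsub hy ⟨hab, le_rfl⟩)), add_eq_left]
    refine (intervalIntegral.integral_congr_ae (ae_of_all _ fun t ht => ?_)).trans integral_zero
    rw [uIoc_of_le hyb] at ht
    simp [hys t ht]
  have hstep : ∀ y ∈ s ∩ Ioc a b, ∀ z ∈ Iio y, (s ∩ Ico z y).Nonempty := by
    rintro y ⟨hys, hay, hyb⟩ z hzy
    have hc : max a z ∈ Icc a b := ⟨le_max_left a z, (max_lt hay hzy).le.trans hyb⟩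
    obtain ⟨x₀, ⟨hcx₀, hx₀y⟩, hsmall⟩ := exists_mem_Ioo_integral_lt
      (hW.mono_set (hsub hc ⟨hay.le, hyb⟩)) (max_lt hay hzy) one_pos
    have hax₀ : a ≤ x₀ := (le_max_left a z).trans hcx₀.le
    have hvanish : EqOn v 0 (Icc x₀ y) :=
      eqOn_zero_of_abs_le_integral_of_integral_lt_one
        (hW.mono_set (hsub ⟨hax₀, hx₀y.le.trans hyb⟩ ⟨hay.le, hyb⟩)) hW0 hx₀y.le hsmall
        (hv.mono (Icc_subset_Icc hax₀ hyb)) fun w hw =>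
          htail y hys hyb w ⟨hax₀.trans hw.1, hw.2⟩ ▸ hbd w ⟨hax₀.trans hw.1, hw.2.trans hyb⟩
    refine ⟨x₀, fun t ht => ?_, (le_max_right a z).trans hcx₀.le, hx₀y⟩
    rcases le_or_gt t y with hty | hyt
    · exact hvanish ⟨ht.1.le, hty⟩
    · exact hys t ⟨hyt, ht.2⟩
  have hxs : x ∈ s := (hs.inter isClosed_Icc).Icc_subset_of_forall_exists_lt
    (fun t ht => absurd ht.2 ht.1.not_ge) hstep hx
  have := htail x hxs hx.2 x ⟨hx.1, le_rfl⟩ ▸ hbd x hx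
  simpa using this

theorem one_le_of_eq_one_add_integral {a b : ℝ} {k : ℝ → ℝ → ℝ} {u : ℝ → ℝ}
    (hu : ContinuousOn u (Icc a b)) (hk : ∀ x ∈ Icc a b, ∀ᵐ t, t ∈ Ioc x b → 0 ≤ k x t)
    (heq : ∀ x ∈ Icc a b, u x = 1 + ∫ t in x..b, k x t * u t) :
    ∀ x ∈ Icc a b, 1 ≤ u x := by
  have hstep : ∀ x ∈ Icc a b, (∀ t ∈ Ioc x b, 0 < u t) → 1 ≤ u x := by
    intro x hx hpos
    have : 0 ≤ ∫ t in x..b, k x t * u t := by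
      rw [integral_of_le hx.2]
      refine setIntegral_nonneg_of_ae_restrict ((ae_restrict_iff' measurableSet_Ioc).2 ?_)
      filter_upwards [hk x hx] with t hkt ht
      exact mul_nonneg (hkt ht) (hpos t ht).le
    linarith [heq x hx]
  have hpos : ∀ x ∈ Icc a b, 0 < u x := by
    by_contra! ⟨x, hx, hux⟩
    have hZ : IsCompact (Icc a b ∩ u ⁻¹' Iic 0) :=
      isCompact_Icc.of_isClosed_subset (hu.preimage_isClosed_of_isClosed isClosed_Icc isClosed_Iic)
        inter_subset_left
    obtain ⟨c, ⟨hc, huc : u c ≤ 0⟩, hmax⟩ := hZ.exists_isGreatest ⟨x, hx, hux⟩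
    have := hstep c hc fun t ht => by
      by_contra! hut
      exact (hmax ⟨⟨hc.1.trans ht.1.le, ht.2⟩, hut⟩).not_gt ht.1
    linarith
  exact fun x hx => hstep x hx fun t ht => hpos t ⟨hx.1.trans ht.1.le, ht.2⟩

theorem re_intervalIntegral_ofReal_mul {φ : ℝ → ℝ} {g : ℝ → ℂ} {x y : ℝ}
    (h : IntervalIntegrable (fun t => (φ t : ℂ) * g t) volume x y) :
    (∫ t in x..y, (φ t : ℂ) * g t).re = ∫ t in x..y, φ t * (g t).re := by
  rw [← RCLike.re_to_complex, ← intervalIntegral_re h]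
  simp

theorem im_intervalIntegral_ofReal_mul {φ : ℝ → ℝ} {g : ℝ → ℂ} {x y : ℝ}
    (h : IntervalIntegrable (fun t => (φ t : ℂ) * g t) volume x y) :
    (∫ t in x..y, (φ t : ℂ) * g t).im = ∫ t in x..y, φ t * (g t).im := by
  rw [← RCLike.im_to_complex, ← intervalIntegral_im h]
  simp

theorem abs_le_integral_of_eq_integral {a b x : ℝ} {V v : ℝ → ℝ}
    (hV : IntervalIntegrable V volume a b) (hv : ContinuousOn v (Icc a b)) (hx : x ∈ Icc a b)
    (heq : v x = ∫ t in x..b, (t - x) * V t * v t) :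
    |v x| ≤ ∫ t in x..b, (b - a) * |V t| * |v t| := by
  have hsub : uIcc x b ⊆ uIcc a b :=
    uIcc_subset_uIcc (Icc_subset_uIcc hx) (Icc_subset_uIcc ⟨hx.1.trans hx.2, le_rfl⟩)
  have hV' : IntervalIntegrable V volume x b := hV.mono_set hsub
  have hv' : ContinuousOn v (uIcc x b) := hv.mono (uIcc_of_le (hx.1.trans hx.2) ▸ hsub)
  calc |v x| ≤ ∫ t in x..b, |(t - x) * V t * v t| := heq ▸ abs_integral_le_integral_abs hx.2
    _ ≤ ∫ t in x..b, (b - a) * |V t| * |v t| := by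
      refine integral_mono_on hx.2
        ((hV'.continuousOn_mul (continuousOn_id.sub continuousOn_const)).mul_continuousOn hv').abs
        ((hV'.abs.const_mul (b - a)).mul_continuousOn hv'.abs) fun t ht => ?_
      rw [abs_mul, abs_mul, abs_of_nonneg (sub_nonneg.2 ht.1)]
      gcongr
      exacts [ht.2, hx.1]

theorem re_im_of_eq_one_add_integral {b : ℝ} {V : ℝ → ℝ} {f : ℝ → ℂ} (hV : Integrable V)
    (hf : ContinuousOn f (Iic b))
    (hfeq : ∀ x ≤ b, f x = 1 + ∫ t in x..b, ((t : ℂ) - (x : ℂ)) * (V t : ℂ) * f t)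
    {x : ℝ} (hx : x ≤ b) :
    (f x).re = 1 + ∫ t in x..b, (t - x) * V t * (f t).re ∧
      (f x).im = ∫ t in x..b, (t - x) * V t * (f t).im := by
  have hint : IntervalIntegrable (fun t => ((t : ℂ) - x) * V t * f t) volume x b :=
    (hV.ofReal.intervalIntegrable.continuousOn_mul (by fun_prop)).mul_continuousOn
      (hf.mono (uIcc_of_le hx ▸ fun t ht => ht.2))
  have hform : (fun t : ℝ => ((t : ℂ) - x) * V t * f t) =
      fun t => (((t - x) * V t : ℝ) : ℂ) * f t := by
    ext t; push_cast; rfl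
  rw [hform] at hint
  rw [hfeq x hx, hform, Complex.add_re, Complex.add_im, re_intervalIntegral_ofReal_mul hint,
    im_intervalIntegral_ofReal_mul hint]
  simp

theorem im_eq_zero_and_one_le_re_of_eq_one_add_integral {a b : ℝ} (hab : a ≤ b) {V : ℝ → ℝ}
    {f : ℝ → ℂ} (hV : Integrable V) (hVpos : ∀ᵐ x : ℝ, 0 ≤ V x) (hf : ContinuousOn f (Iic b))
    (hfeq : ∀ x ≤ b, f x = 1 + ∫ t in x..b, ((t : ℂ) - (x : ℂ)) * (V t : ℂ) * f t) :
    ∀ x ∈ Icc a b, (f x).im = 0 ∧ 1 ≤ (f x).re := by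
  have hf' : ContinuousOn f (Icc a b) := hf.mono fun t ht => ht.2
  have hjost x (hx : x ∈ Icc a b) := re_im_of_eq_one_add_integral hV hf hfeq hx.2
  have him : EqOn (fun t => (f t).im) 0 (Icc a b) :=
    eqOn_zero_of_abs_le_integral ((hV.abs.const_mul (b - a)).intervalIntegrable)
      (fun t => mul_nonneg (sub_nonneg.2 hab) (abs_nonneg _))
      (Complex.continuous_im.comp_continuousOn hf') fun x hx =>
        abs_le_integral_of_eq_integral hV.intervalIntegrable
          (Complex.continuous_im.comp_continuousOn hf') hx (hjost x hx).2
  have hre : ∀ x ∈ Icc a b, 1 ≤ (f x).re :=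
    one_le_of_eq_one_add_integral (Complex.continuous_re.comp_continuousOn hf')
      (fun x _ => by
        filter_upwards [hVpos] with t hVt ht using mul_nonneg (sub_nonneg.2 ht.1.le) hVt)
      fun x hx => (hjost x hx).1
  exact fun x hx => ⟨him hx, hre x hx⟩

theorem statement7_general
    (a b : ℝ) (hab : a < b)
    (V : ℝ → ℝ) (hV : Integrable V)
    (hVpos : ∀ᵐ x : ℝ, 0 ≤ V x)
    (hVint : 0 < ∫ t in a..b, V t)
    (f : ℝ → ℂ)
    (hfcont : ContinuousOn f (Set.Iic b))
    (hfeq : ∀ x ≤ b, f x = 1 + ∫ t in x..b, ((t : ℂ) - (x : ℂ)) * (V t : ℂ) * f t)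
    (w₀ : ℂ) (hw₀ : w₀ = ∫ t in a..b, (V t : ℂ) * f t) :
    w₀.im = 0 ∧ (∫ t in a..b, V t) ≤ w₀.re ∧ w₀ ≠ 0 := by
  have hsol := im_eq_zero_and_one_le_re_of_eq_one_add_integral hab.le hV hVpos hfcont hfeq
  have hf : ContinuousOn f (uIcc a b) := hfcont.mono (uIcc_of_le hab.le ▸ fun t ht => ht.2)
  have hint : IntervalIntegrable (fun t => (V t : ℂ) * f t) volume a b :=
    hV.ofReal.intervalIntegrable.mul_continuousOn hf
  have hw_im : w₀.im = 0 := by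
    rw [hw₀, im_intervalIntegral_ofReal_mul hint]
    refine (integral_congr fun t ht => ?_).trans integral_zero
    simp [(hsol t (uIcc_of_le hab.le ▸ ht)).1]
  have hw_re : (∫ t in a..b, V t) ≤ w₀.re := by
    rw [hw₀, re_intervalIntegral_ofReal_mul hint]
    refine integral_mono_ae_restrict hab.le hV.intervalIntegrable
      (hV.intervalIntegrable.mul_continuousOn (Complex.continuous_re.comp_continuousOn hf)) ?_
    filter_upwards [ae_restrict_of_ae hVpos, ae_restrict_mem measurableSet_Icc] with t hVt ht
    exact le_mul_of_one_le_right hVt (hsol t ht).2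
  refine ⟨hw_im, hw_re, fun h => ?_⟩
  rw [h, Complex.zero_re] at hw_re
  linarith

/-- If moreover `V ≥ 0` a.e. and `∫_a^b V > 0`, then the
zero-energy Jost function `w(0) = ∫_a^b V(t) f(t) dt`, where `f = b(·,0)` is the
continuous solution of the zero-energy Jost integral equation, is real and
satisfies `w(0) ≥ ∫_a^b V > 0`; in particular `w(0) ≠ 0`. -/
theorem statement7
    (a b : ℝ) (hab : a < b)
    (V : ℝ → ℝ) (hV : Integrable V)
    (hVsupp : ∀ x, x ∉ Set.Icc a b → V x = 0)
    (hVpos : ∀ᵐ x : ℝ, 0 ≤ V x)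
    (hVint : 0 < ∫ t in a..b, V t)
    (f : ℝ → ℂ)
    (hfcont : ContinuousOn f (Set.Iic b))
    (hfeq : ∀ x ≤ b, f x = 1 + ∫ t in x..b, ((t : ℂ) - (x : ℂ)) * (V t : ℂ) * f t)
    (w₀ : ℂ) (hw₀ : w₀ = ∫ t in a..b, (V t : ℂ) * f t) :
    w₀.im = 0 ∧ (∫ t in a..b, V t) ≤ w₀.re ∧ w₀ ≠ 0 :=
  statement7_general a b hab V hV hVpos hVint f hfcont hfeq w₀ hw₀
end

section
/- Let a < b be real numbers, let V : ℝ → ℝ be Lebesgue integrable and vanish outside [a,b], and let k ∈ ℝ. Suppose u : ℝ → ℂ is continuously differentiable, u′ is locally absolutely continuous, −u″(x) + V(x)·u(x) = k²·u(x) for almost every x ∈ ℝ, and u(x) = e^{ikx} for all x ≥ b. Set w = −e^{−ika}·(u′(a) + i·k·u(a)) and w₀ = −e^{−ika}·(conj(u′(a)) + i·k·conj(u(a))). Then |w|² = 4k² + |w₀|²; in particular |w| ≥ 2|k|. -/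
/-!
The Wronskian `W = u′ ū − ū′ u` of `u` with its complex conjugate is absolutely continuous, and
since `V − k²` is real its derivative `u″ ū − ū″ u` vanishes almost everywhere; hence `W` is
constant. Beyond `b`, where `u = e^{ikx}`, it equals `2ik`. Since `|e^{−ika}| = 1`,
`|w|² − |w₀|² = |u′ + iku|² − |ū′ + ikū|² = −2ik · W(a) = 4k²`.
-/

open MeasureTheory intervalIntegral ComplexConjugate

open Set Filter in
theorem AbsolutelyContinuousOnInterval.of_dist_le {X Y : Type*} [PseudoMetricSpace X]
    [PseudoMetricSpace Y] {f : ℝ → X} {g : ℝ → Y} {a b : ℝ}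
    (hg : AbsolutelyContinuousOnInterval g a b)
    (hfg : ∀ x ∈ uIcc a b, ∀ y ∈ uIcc a b, dist (f x) (f y) ≤ dist (g x) (g y)) :
    AbsolutelyContinuousOnInterval f a b := by
  refine squeeze_zero' (Eventually.of_forall fun _ ↦ Finset.sum_nonneg fun _ _ ↦ dist_nonneg)
    ?_ hg
  filter_upwards [eventually_inf_principal.mpr (Eventually.of_forall fun _ h ↦ h)]
    with E hE
  exact Finset.sum_le_sum fun i hi ↦ hfg _ (hE.1 i hi).1 _ (hE.1 i hi).2

theorem absolutelyContinuousOnInterval_of_sub_eq_intervalIntegral {E : Type*}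
    [NormedAddCommGroup E] [NormedSpace ℝ E] {f g : ℝ → E} (hf : LocallyIntegrable f)
    (hg : ∀ x y, g y - g x = ∫ t in x..y, f t) (a b : ℝ) :
    AbsolutelyContinuousOnInterval g a b := by
  have hfi (x y : ℝ) : IntervalIntegrable f volume x y :=
    (hf.integrableOn_isCompact isCompact_uIcc).intervalIntegrable
  -- `g` is dominated termwise by the real absolutely continuous `x ↦ ∫ t in a..x, ‖f t‖`.
  refine ((hfi a b).norm.absolutelyContinuousOnInterval_intervalIntegral
    Set.left_mem_uIcc).of_dist_le fun x _ y _ ↦ ?_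
  rw [dist_eq_norm, hg y x, Real.dist_eq, integral_interval_sub_left
    (hfi a x).norm (hfi a y).norm]
  exact norm_integral_le_abs_integral_norm

def conjWronskian (u u' : ℝ → ℂ) (x : ℝ) : ℂ := u' x * conj (u x) - conj (u' x) * u x

theorem conjWronskian_eq_of_ae_schrodinger (V : ℝ → ℝ) (E : ℝ) {u u' u'' : ℝ → ℂ}
    (hu : ∀ x, HasDerivAt u (u' x) x) (hu'c : Continuous u')
    (hu''li : LocallyIntegrable u'')
    (huFTC : ∀ x y : ℝ, u' y - u' x = ∫ t in x..y, u'' t)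
    (hode : ∀ᵐ x : ℝ, -u'' x + (V x : ℂ) * u x = (E : ℂ) * u x) (x y : ℝ) :
    conjWronskian u u' x = conjWronskian u u' y := by
  have hu_ac : AbsolutelyContinuousOnInterval u x y := by
    have hderiv : deriv u = u' := funext fun x ↦ (hu x).deriv
    refine ContDiff.contDiffOn ?_ |>.absolutelyContinuousOnInterval
    exact contDiff_one_iff_deriv.mpr ⟨fun x ↦ (hu x).differentiableAt, hderiv ▸ hu'c⟩
  have hu'_ac : AbsolutelyContinuousOnInterval u' x y :=
    absolutelyContinuousOnInterval_of_sub_eq_intervalIntegral hu''li huFTC x y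
  have hconj_ac {f : ℝ → ℂ} (hf : AbsolutelyContinuousOnInterval f x y) :
      AbsolutelyContinuousOnInterval (fun t ↦ conj (f t)) x y :=
    hf.of_dist_le fun s _ t _ ↦ (Complex.dist_conj_conj _ _).le
  have hW_ac : AbsolutelyContinuousOnInterval (conjWronskian u u') x y :=
    (hu'_ac.fun_smul (hconj_ac hu_ac)).fun_sub ((hconj_ac hu'_ac).fun_smul hu_ac)
  have hu'' : ∀ᵐ t : ℝ, HasDerivAt u' (u'' t) t := by
    filter_upwards [LocallyIntegrable.ae_hasDerivAt_integral hu''li] with t ht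
    have hu'_eq : u' = fun s ↦ u' 0 + ∫ r in 0..s, u'' r :=
      funext fun s ↦ by rw [← huFTC 0 s, add_sub_cancel]
    rw [hu'_eq]
    exact (ht 0).const_add _
  have hW' : ∀ᵐ t : ℝ, t ∈ Set.uIcc x y → HasDerivAt (conjWronskian u u') 0 t := by
    filter_upwards [hu'', hode] with t ht hodet _
    have hu''t : u'' t = (V t - E : ℂ) * u t := by linear_combination -hodet
    have hconj {f : ℝ → ℂ} {f' : ℂ} (hf : HasDerivAt f f' t) :
        HasDerivAt (fun s ↦ conj (f s)) (conj f') t :=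
      hf.star
    refine ((ht.fun_mul (hconj (hu t))).fun_sub ((hconj ht).fun_mul (hu t))).congr_deriv ?_
    rw [hu''t, map_mul, map_sub, Complex.conj_ofReal, Complex.conj_ofReal]
    ring
  obtain ⟨C, hC⟩ := hW_ac.const_of_ae_hasDerivAt_zero hW'
  rw [hC x Set.left_mem_uIcc, hC y Set.right_mem_uIcc]

theorem conjWronskian_eq_of_eq_exp {u u' : ℝ → ℂ} {k b c : ℝ}
    (hu : ∀ x, HasDerivAt u (u' x) x)
    (hext : ∀ x : ℝ, b ≤ x → u x = Complex.exp (Complex.I * k * x)) (hc : b < c) :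
    conjWronskian u u' c = 2 * Complex.I * k := by
  have hwave : HasDerivAt (fun x : ℝ ↦ Complex.exp (Complex.I * k * x))
      (Complex.exp (Complex.I * k * c) * (Complex.I * k)) c := by
    simpa using ((Complex.ofRealCLM.hasDerivAt (x := c)).const_mul (Complex.I * k)).cexp
  have hu_eq : u =ᶠ[nhds c] fun x : ℝ ↦ Complex.exp (Complex.I * k * x) :=
    Filter.eventually_of_mem (Ioi_mem_nhds hc) fun x hx ↦ hext x (le_of_lt hx)
  have hu'c : u' c = Complex.exp (Complex.I * k * c) * (Complex.I * k) :=
    (hu c).unique (hwave.congr_of_eventuallyEq hu_eq)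
  have hunit : Complex.exp (Complex.I * k * c) * conj (Complex.exp (Complex.I * k * c)) = 1 := by
    rw [Complex.mul_conj', Complex.norm_exp]
    simp
  rw [conjWronskian, hu'c, hext c hc.le]
  simp only [map_mul, Complex.conj_I, Complex.conj_ofReal]
  linear_combination 2 * Complex.I * k * hunit

theorem norm_sq_eq_four_mul_sq_add_norm_sq {p q e : ℂ} {k : ℝ} (he : ‖e‖ = 1)
    (hW : q * conj p - conj q * p = 2 * Complex.I * k) :
    ‖-e * (q + Complex.I * k * p)‖ ^ 2
      = 4 * k ^ 2 + ‖-e * (conj q + Complex.I * k * conj p)‖ ^ 2 := by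
  simp only [norm_mul, norm_neg, he, one_mul]
  apply Complex.ofReal_injective
  push_cast
  rw [← Complex.mul_conj', ← Complex.mul_conj']
  simp only [map_add, map_mul, Complex.conj_I, Complex.conj_ofReal, Complex.conj_conj]
  linear_combination (-2 * Complex.I * k) * hW - 4 * k ^ 2 * Complex.I_sq

theorem statement10_general
    (a b : ℝ)
    (V : ℝ → ℝ)
    (k : ℝ)
    (u u' u'' : ℝ → ℂ)
    (hu : ∀ x, HasDerivAt u (u' x) x) (hu'c : Continuous u')
    (hu''li : LocallyIntegrable u'')
    (huFTC : ∀ x y : ℝ, u' y - u' x = ∫ t in x..y, u'' t)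
    (hode : ∀ᵐ x : ℝ, -u'' x + (V x : ℂ) * u x = (k : ℂ) ^ 2 * u x)
    (hext : ∀ x : ℝ, b ≤ x → u x = Complex.exp (Complex.I * k * x))
    (w w₀ : ℂ)
    (hw : w = -(Complex.exp (-(Complex.I * k * a))) * (u' a + Complex.I * k * u a))
    (hw₀ : w₀ = -(Complex.exp (-(Complex.I * k * a)))
        * ((starRingEnd ℂ) (u' a) + Complex.I * k * (starRingEnd ℂ) (u a))) :
    ‖w‖ ^ 2 = 4 * k ^ 2 + ‖w₀‖ ^ 2 ∧
      2 * |k| ≤ ‖w‖ := by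
  have hW : conjWronskian u u' a = 2 * Complex.I * k := by
    rw [conjWronskian_eq_of_ae_schrodinger V (k ^ 2) hu hu'c hu''li huFTC
      (by simpa only [Complex.ofReal_pow] using hode) a (b + 1)]
    exact conjWronskian_eq_of_eq_exp hu hext (lt_add_one b)
  have hunit : ‖Complex.exp (-(Complex.I * k * a))‖ = 1 := by
    rw [Complex.norm_exp]
    simp
  have hnorm : ‖w‖ ^ 2 = 4 * k ^ 2 + ‖w₀‖ ^ 2 :=
    hw ▸ hw₀ ▸ norm_sq_eq_four_mul_sq_add_norm_sq hunit hW
  refine ⟨hnorm, (pow_le_pow_iff_left₀ (by positivity) (norm_nonneg w) two_ne_zero).mp ?_⟩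
  rw [hnorm, mul_pow, sq_abs]
  linarith [sq_nonneg ‖w₀‖]

/-- For a solution `u` of `−u″ + Vu = k²u` (a.e., with `u`
of class `C¹` and `u′` locally absolutely continuous) equal to `e^{ikx}` for
`x ≥ b`, the Wronskians `w = −e^{−ika}(u′(a) + ik u(a))` and
`w₀ = −e^{−ika}(conj(u′(a)) + ik conj(u(a)))` satisfy `|w|² = 4k² + |w₀|²`;
in particular `|w| ≥ 2|k|`. -/
theorem statement10
    (a b : ℝ) (hab : a < b)
    (V : ℝ → ℝ) (hV : Integrable V)
    (hVsupp : ∀ x, x ∉ Set.Icc a b → V x = 0)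
    (k : ℝ)
    (u u' u'' : ℝ → ℂ)
    (hu : ∀ x, HasDerivAt u (u' x) x) (hu'c : Continuous u')
    (hu''li : LocallyIntegrable u'')
    (huFTC : ∀ x y : ℝ, u' y - u' x = ∫ t in x..y, u'' t)
    (hode : ∀ᵐ x : ℝ, -u'' x + (V x : ℂ) * u x = (k : ℂ) ^ 2 * u x)
    (hext : ∀ x : ℝ, b ≤ x → u x = Complex.exp (Complex.I * k * x))
    (w w₀ : ℂ)
    (hw : w = -(Complex.exp (-(Complex.I * k * a))) * (u' a + Complex.I * k * u a))
    (hw₀ : w₀ = -(Complex.exp (-(Complex.I * k * a)))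
        * ((starRingEnd ℂ) (u' a) + Complex.I * k * (starRingEnd ℂ) (u a))) :
    ‖w‖ ^ 2 = 4 * k ^ 2 + ‖w₀‖ ^ 2 ∧
      2 * |k| ≤ ‖w‖ :=
  statement10_general a b V k u u' u'' hu hu'c hu''li huFTC hode hext w w₀ hw hw₀
end

section
/- Let a < b be real numbers and let V : ℝ → ℝ be Lebesgue integrable. Let ψ, φ : ℝ → ℂ be compactly supported functions that are twice continuously differentiable on each of the intervals (−∞,a), (a,b), (b,∞), and such that ψ, ψ′, ψ″, φ, φ′, φ″ all extend continuously to the closure of each of these three intervals (so all one-sided limits at a and at b exist). Then ∫_{ℝ∖{a,b}} [ conj(ψ(x))·(−φ″(x) + V(x)·φ(x)) − conj(−ψ″(x) + V(x)·ψ(x))·φ(x) ] dx = ⟨Γ₀ψ, Γ₁φ⟩_{ℂ⁴} − ⟨Γ₁ψ, Γ₀φ⟩_{ℂ⁴}. -/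
open MeasureTheory Filter Matrix

/-! Off `{a, b}` the integrand is the derivative of the Wronskian `W = conj ψ' * φ - conj ψ * φ'`
(the potential cancels pointwise). By the fundamental theorem of calculus on each of the three
intervals, the integral is the sum of the jumps `W(a⁻) - W(a⁺) + W(b⁻) - W(b⁺)`: compact support
makes the contributions at `±∞` vanish, and the one-sided limits of `ψ''` and `φ''` make the
integrand integrable up to `a` and `b`. Expanding the jumps gives `⟨Γ₀ψ, Γ₁φ⟩ - ⟨Γ₁ψ, Γ₀φ⟩`. -/

open Set Topology ComplexConjugate

section OneSidedLimits

variable {E : Type*} [NormedAddCommGroup E]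

theorem ContinuousOn.intervalIntegrable_of_tendsto {f : ℝ → E} {c d : ℝ} (hcd : c < d)
    (hf : ContinuousOn f (Ioo c d)) {lc ld : E} (hc : Tendsto f (𝓝[>] c) (𝓝 lc))
    (hd : Tendsto f (𝓝[<] d) (𝓝 ld)) : IntervalIntegrable f volume c d := by
  have hext : ContinuousOn (extendFrom (Ioo c d) f) (Icc c d) := by
    refine continuousOn_extendFrom (by rw [closure_Ioo hcd.ne]) fun x hx => ?_
    rcases hx.1.eq_or_lt with rfl | hcx
    · exact ⟨lc, by rwa [nhdsWithin_Ioo_eq_nhdsGT hcd]⟩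
    rcases hx.2.eq_or_lt with rfl | hxd
    · exact ⟨ld, by rwa [nhdsWithin_Ioo_eq_nhdsLT hcd]⟩
    exact ⟨f x, hf x ⟨hcx, hxd⟩⟩
  refine (hext.intervalIntegrable_of_Icc hcd.le).congr_uIoo fun x hx => ?_
  rw [uIoo_of_le hcd.le] at hx
  exact extendFrom_extends hf x hx

variable [NormedSpace ℝ E]

theorem eqOn_zero_of_hasDerivAt_of_eqOn_zero {F G : ℝ → E} {U : Set ℝ}
    (hU : IsOpen U) (hF : EqOn F 0 U) (hderiv : ∀ x ∈ U, HasDerivAt F (G x) x) :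
    EqOn G 0 U := fun x hx =>
  (hderiv x hx).unique <| (hasDerivAt_const x (0 : E)).congr_of_eventuallyEq <|
    eventuallyEq_of_mem (hU.mem_nhds hx) hF

theorem integral_compl_pair_eq_sum_jumps [CompleteSpace E] {F G : ℝ → E} {a b : ℝ} (hab : a < b)
    (hF : HasCompactSupport F) (hderiv : ∀ x ∈ ({a, b} : Set ℝ)ᶜ, HasDerivAt F (G x) x)
    (hG : ContinuousOn G ({a, b} : Set ℝ)ᶜ)
    (hGlim : ∀ α ∈ ({a, b} : Set ℝ), ∀ s ∈ ({Iio α, Ioi α} : Set (Set ℝ)),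
      ∃ l, Tendsto G (𝓝[s] α) (𝓝 l))
    {Fam Fap Fbm Fbp : E} (hFam : Tendsto F (𝓝[<] a) (𝓝 Fam))
    (hFap : Tendsto F (𝓝[>] a) (𝓝 Fap)) (hFbm : Tendsto F (𝓝[<] b) (𝓝 Fbm))
    (hFbp : Tendsto F (𝓝[>] b) (𝓝 Fbp)) :
    ∫ x in ({a, b} : Set ℝ)ᶜ, G x = (Fam - Fap) + (Fbm - Fbp) := by
  obtain ⟨m, hm⟩ := hF.isCompact.bddBelow
  obtain ⟨M, hM⟩ := hF.isCompact.bddAbove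
  set c := min a m - 1
  set d := max b M + 1
  have hF0 : EqOn F 0 (Iio (min a m) ∪ Ioi (max b M)) := by
    rintro x (hx | hx) <;> refine image_eq_zero_of_notMem_tsupport fun h => ?_
    · exact (hm h).not_gt (hx.trans_le (min_le_right a m))
    · exact (hM h).not_gt ((le_max_right b M).trans_lt hx)
  have hG0 : EqOn G 0 (Iio (min a m) ∪ Ioi (max b M)) := by
    refine eqOn_zero_of_hasDerivAt_of_eqOn_zero (isOpen_Iio.union isOpen_Ioi) hF0 fun x hx => ?_
    refine hderiv x ?_
    rcases hx with hx | hx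
    · have := hx.trans_le (min_le_left a m); simp [this.ne, (this.trans hab).ne]
    · have := (le_max_left b M).trans_lt hx; simp [this.ne', (hab.trans this).ne']
  have hc : ∀ f : ℝ → E, EqOn f 0 (Iio (min a m)) → Tendsto f (𝓝[>] c) (𝓝 0) := fun f hf =>
    tendsto_const_nhds.congr' <| eventuallyEq_of_mem
      (nhdsWithin_le_nhds (Iio_mem_nhds (sub_one_lt _))) fun x hx => (hf hx).symm
  have hd : ∀ f : ℝ → E, EqOn f 0 (Ioi (max b M)) → Tendsto f (𝓝[<] d) (𝓝 0) := fun f hf =>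
    tendsto_const_nhds.congr' <| eventuallyEq_of_mem
      (nhdsWithin_le_nhds (Ioi_mem_nhds (lt_add_one _))) fun x hx => (hf hx).symm
  have hca : c < a := (sub_one_lt _).trans_le (min_le_left a m)
  have hbd : b < d := (le_max_left b M).trans_lt (lt_add_one _)
  have hmem : ∀ x, x ≠ a → x ≠ b → x ∈ ({a, b} : Set ℝ)ᶜ := fun x ha hb => by simp [ha, hb]
  have hca' : Ioo c a ⊆ ({a, b} : Set ℝ)ᶜ := fun x hx => hmem x hx.2.ne (hx.2.trans hab).ne
  have hab' : Ioo a b ⊆ ({a, b} : Set ℝ)ᶜ := fun x hx => hmem x hx.1.ne' hx.2.ne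
  have hbd' : Ioo b d ⊆ ({a, b} : Set ℝ)ᶜ := fun x hx => hmem x (hab.trans hx.1).ne' hx.1.ne'
  obtain ⟨Gam, hGam⟩ := hGlim a (by simp) (Iio a) (by simp)
  obtain ⟨Gap, hGap⟩ := hGlim a (by simp) (Ioi a) (by simp)
  obtain ⟨Gbm, hGbm⟩ := hGlim b (by simp) (Iio b) (by simp)
  obtain ⟨Gbp, hGbp⟩ := hGlim b (by simp) (Ioi b) (by simp)
  have hi₁ : IntervalIntegrable G volume c a :=
    (hG.mono hca').intervalIntegrable_of_tendsto hca (hc G fun x hx => hG0 (.inl hx)) hGam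
  have hi₂ : IntervalIntegrable G volume a b :=
    (hG.mono hab').intervalIntegrable_of_tendsto hab hGap hGbm
  have hi₃ : IntervalIntegrable G volume b d :=
    (hG.mono hbd').intervalIntegrable_of_tendsto hbd hGbp (hd G fun x hx => hG0 (.inr hx))
  have hcd : ∫ x in ({a, b} : Set ℝ)ᶜ, G x = ∫ x in c..d, G x := by
    rw [Measure.restrict_eq_self_of_ae_mem, intervalIntegral.integral_of_le
      (hca.trans (hab.trans hbd)).le, setIntegral_eq_integral_of_forall_compl_eq_zero]
    · intro x hx
      rcases not_and_or.1 hx with hxc | hxd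
      · exact hG0 (.inl ((not_lt.1 hxc).trans_lt (sub_one_lt _)))
      · exact hG0 (.inr ((lt_add_one _).trans (not_le.1 hxd)))
    · exact compl_mem_ae_iff.2 ((toFinite _).measure_zero _)
  rw [hcd, ← intervalIntegral.integral_add_adjacent_intervals (hi₁.trans hi₂) hi₃,
    ← intervalIntegral.integral_add_adjacent_intervals hi₁ hi₂,
    intervalIntegral.integral_eq_sub_of_hasDerivAt_of_tendsto hca
      (fun x hx => hderiv x (hca' hx)) hi₁ (hc F fun x hx => hF0 (.inl hx)) hFam,
    intervalIntegral.integral_eq_sub_of_hasDerivAt_of_tendsto hab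
      (fun x hx => hderiv x (hab' hx)) hi₂ hFap hFbm,
    intervalIntegral.integral_eq_sub_of_hasDerivAt_of_tendsto hbd
      (fun x hx => hderiv x (hbd' hx)) hi₃ hFbp (hd F fun x hx => hF0 (.inr hx))]
  abel

end OneSidedLimits

theorem hasDerivAt_conj_wronskian {u u' v v' : ℝ → ℂ} {u'' v'' : ℂ} {x : ℝ}
    (hu : HasDerivAt u (u' x) x) (hu' : HasDerivAt u' u'' x)
    (hv : HasDerivAt v (v' x) x) (hv' : HasDerivAt v' v'' x) :
    HasDerivAt (fun y => conj (u' y) * v y - conj (u y) * v' y)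
      (conj u'' * v x - conj (u x) * v'') x := by
  refine ((hu'.star.mul hv).sub (hu.star.mul hv')).congr_deriv ?_
  simp only [starRingEnd_apply]
  ring

theorem statement16_general
    (a b : ℝ) (hab : a < b)
    (V : ℝ → ℝ)
    (ψ φ : ℝ → ℂ)
    (hψsupp : HasCompactSupport ψ) (hφsupp : HasCompactSupport φ)
    (ψ' ψ'' φ' φ'' : ℝ → ℂ)
    (hψd : ∀ x ∈ ({a, b} : Set ℝ)ᶜ, HasDerivAt ψ (ψ' x) x)
    (hψd2 : ∀ x ∈ ({a, b} : Set ℝ)ᶜ, HasDerivAt ψ' (ψ'' x) x)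
    (hψ''c : ContinuousOn ψ'' ({a, b} : Set ℝ)ᶜ)
    (hφd : ∀ x ∈ ({a, b} : Set ℝ)ᶜ, HasDerivAt φ (φ' x) x)
    (hφd2 : ∀ x ∈ ({a, b} : Set ℝ)ᶜ, HasDerivAt φ' (φ'' x) x)
    (hφ''c : ContinuousOn φ'' ({a, b} : Set ℝ)ᶜ)
    -- one-sided boundary values of ψ and ψ′
    (ψam ψap ψbm ψbp dψam dψap dψbm dψbp : ℂ)
    (hψam : Tendsto ψ (nhdsWithin a (Set.Iio a)) (nhds ψam))
    (hψap : Tendsto ψ (nhdsWithin a (Set.Ioi a)) (nhds ψap))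
    (hψbm : Tendsto ψ (nhdsWithin b (Set.Iio b)) (nhds ψbm))
    (hψbp : Tendsto ψ (nhdsWithin b (Set.Ioi b)) (nhds ψbp))
    (hdψam : Tendsto ψ' (nhdsWithin a (Set.Iio a)) (nhds dψam))
    (hdψap : Tendsto ψ' (nhdsWithin a (Set.Ioi a)) (nhds dψap))
    (hdψbm : Tendsto ψ' (nhdsWithin b (Set.Iio b)) (nhds dψbm))
    (hdψbp : Tendsto ψ' (nhdsWithin b (Set.Ioi b)) (nhds dψbp))
    -- one-sided boundary values of φ and φ′
    (φam φap φbm φbp dφam dφap dφbm dφbp : ℂ)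
    (hφam : Tendsto φ (nhdsWithin a (Set.Iio a)) (nhds φam))
    (hφap : Tendsto φ (nhdsWithin a (Set.Ioi a)) (nhds φap))
    (hφbm : Tendsto φ (nhdsWithin b (Set.Iio b)) (nhds φbm))
    (hφbp : Tendsto φ (nhdsWithin b (Set.Ioi b)) (nhds φbp))
    (hdφam : Tendsto φ' (nhdsWithin a (Set.Iio a)) (nhds dφam))
    (hdφap : Tendsto φ' (nhdsWithin a (Set.Ioi a)) (nhds dφap))
    (hdφbm : Tendsto φ' (nhdsWithin b (Set.Iio b)) (nhds dφbm))
    (hdφbp : Tendsto φ' (nhdsWithin b (Set.Ioi b)) (nhds dφbp))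
    -- the second derivatives also extend continuously (one-sided limits exist)
    (hψ''lim : ∀ α ∈ ({a, b} : Set ℝ), ∀ s ∈ ({Set.Iio α, Set.Ioi α} : Set (Set ℝ)),
      ∃ l : ℂ, Tendsto ψ'' (nhdsWithin α s) (nhds l))
    (hφ''lim : ∀ α ∈ ({a, b} : Set ℝ), ∀ s ∈ ({Set.Iio α, Set.Ioi α} : Set (Set ℝ)),
      ∃ l : ℂ, Tendsto φ'' (nhdsWithin α s) (nhds l)) :
    (∫ x in ({a, b} : Set ℝ)ᶜ,
        ((starRingEnd ℂ) (ψ x) * (-φ'' x + (V x : ℂ) * φ x)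
          - (starRingEnd ℂ) (-ψ'' x + (V x : ℂ) * ψ x) * φ x))
      = star (![dψbm - dψbp, ψbp - ψbm, dψam - dψap, ψap - ψam]) ⬝ᵥ
          ((1 / 2 : ℂ) • ![φbp + φbm, dφbp + dφbm, φap + φam, dφap + dφam])
        - star ((1 / 2 : ℂ) • ![ψbp + ψbm, dψbp + dψbm, ψap + ψam, dψap + dψam]) ⬝ᵥ
          ![dφbm - dφbp, φbp - φbm, dφam - dφap, φap - φam] := by
  set W : ℝ → ℂ := fun x => conj (ψ' x) * φ x - conj (ψ x) * φ' x
  set G : ℝ → ℂ := fun x => conj (ψ'' x) * φ x - conj (ψ x) * φ'' x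
  have hψc : ContinuousOn ψ ({a, b} : Set ℝ)ᶜ := fun x hx =>
    (hψd x hx).continuousAt.continuousWithinAt
  have hφc : ContinuousOn φ ({a, b} : Set ℝ)ᶜ := fun x hx =>
    (hφd x hx).continuousAt.continuousWithinAt
  have hGlim : ∀ α ∈ ({a, b} : Set ℝ), ∀ s ∈ ({Iio α, Ioi α} : Set (Set ℝ)),
      ∃ l, Tendsto G (𝓝[s] α) (𝓝 l) := by
    intro α hα s hs
    obtain ⟨l₁, h₁⟩ := hψ''lim α hα s hs
    obtain ⟨l₂, h₂⟩ := hφ''lim α hα s hs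
    obtain ⟨⟨L₁, H₁⟩, L₂, H₂⟩ :
        (∃ l, Tendsto ψ (𝓝[s] α) (𝓝 l)) ∧ ∃ l, Tendsto φ (𝓝[s] α) (𝓝 l) := by
      simp only [mem_insert_iff, mem_singleton_iff] at hα hs
      rcases hα with rfl | rfl <;> rcases hs with rfl | rfl <;> exact ⟨⟨_, ‹_›⟩, _, ‹_›⟩
    exact ⟨_, (h₁.star.mul H₂).sub (H₁.star.mul h₂)⟩
  have hjumps := integral_compl_pair_eq_sum_jumps (F := W) hab
    (hφsupp.mul_left.sub (hψsupp.comp_left (map_zero (starRingEnd ℂ))).mul_right)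
    (fun x hx => hasDerivAt_conj_wronskian (hψd x hx) (hψd2 x hx) (hφd x hx) (hφd2 x hx))
    ((hψ''c.star.mul hφc).sub (hψc.star.mul hφ''c)) hGlim
    ((hdψam.star.mul hφam).sub (hψam.star.mul hdφam))
    ((hdψap.star.mul hφap).sub (hψap.star.mul hdφap))
    ((hdψbm.star.mul hφbm).sub (hψbm.star.mul hdφbm))
    ((hdψbp.star.mul hφbp).sub (hψbp.star.mul hdφbp))
  have hintegrand : ∀ x, conj (ψ x) * (-φ'' x + (V x : ℂ) * φ x)
      - conj (-ψ'' x + (V x : ℂ) * ψ x) * φ x = G x := fun x => by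
    simp only [G, map_add, map_neg, map_mul, Complex.conj_ofReal]
    ring
  simp only [hintegrand]
  rw [hjumps]
  simp only [dotProduct, Fin.sum_univ_four, Pi.star_apply, Pi.smul_apply, cons_val_zero,
    cons_val_one, cons_val_two, cons_val_three, head_cons, tail_cons, smul_eq_mul, star_sub,
    star_add, star_mul', star_div₀, star_one, star_ofNat]
  ring

/-- Green's identity with boundary terms: for compactly
supported functions `ψ, φ` that are twice continuously differentiable off the
points `a < b`, with all one-sided limits of `ψ, ψ′, ψ″, φ, φ′, φ″` at `a` and
`b`, the symmetric sesquilinear integral of the Schrödinger expressions equals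
`⟨Γ₀ψ, Γ₁φ⟩ − ⟨Γ₁ψ, Γ₀φ⟩` in `ℂ⁴`. -/
theorem statement16
    (a b : ℝ) (hab : a < b)
    (V : ℝ → ℝ) (hV : Integrable V)
    (ψ φ : ℝ → ℂ)
    (hψsupp : HasCompactSupport ψ) (hφsupp : HasCompactSupport φ)
    (ψ' ψ'' φ' φ'' : ℝ → ℂ)
    (hψd : ∀ x ∈ ({a, b} : Set ℝ)ᶜ, HasDerivAt ψ (ψ' x) x)
    (hψd2 : ∀ x ∈ ({a, b} : Set ℝ)ᶜ, HasDerivAt ψ' (ψ'' x) x)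
    (hψ''c : ContinuousOn ψ'' ({a, b} : Set ℝ)ᶜ)
    (hφd : ∀ x ∈ ({a, b} : Set ℝ)ᶜ, HasDerivAt φ (φ' x) x)
    (hφd2 : ∀ x ∈ ({a, b} : Set ℝ)ᶜ, HasDerivAt φ' (φ'' x) x)
    (hφ''c : ContinuousOn φ'' ({a, b} : Set ℝ)ᶜ)
    -- one-sided boundary values of ψ and ψ′
    (ψam ψap ψbm ψbp dψam dψap dψbm dψbp : ℂ)
    (hψam : Tendsto ψ (nhdsWithin a (Set.Iio a)) (nhds ψam))
    (hψap : Tendsto ψ (nhdsWithin a (Set.Ioi a)) (nhds ψap))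
    (hψbm : Tendsto ψ (nhdsWithin b (Set.Iio b)) (nhds ψbm))
    (hψbp : Tendsto ψ (nhdsWithin b (Set.Ioi b)) (nhds ψbp))
    (hdψam : Tendsto ψ' (nhdsWithin a (Set.Iio a)) (nhds dψam))
    (hdψap : Tendsto ψ' (nhdsWithin a (Set.Ioi a)) (nhds dψap))
    (hdψbm : Tendsto ψ' (nhdsWithin b (Set.Iio b)) (nhds dψbm))
    (hdψbp : Tendsto ψ' (nhdsWithin b (Set.Ioi b)) (nhds dψbp))
    -- one-sided boundary values of φ and φ′
    (φam φap φbm φbp dφam dφap dφbm dφbp : ℂ)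
    (hφam : Tendsto φ (nhdsWithin a (Set.Iio a)) (nhds φam))
    (hφap : Tendsto φ (nhdsWithin a (Set.Ioi a)) (nhds φap))
    (hφbm : Tendsto φ (nhdsWithin b (Set.Iio b)) (nhds φbm))
    (hφbp : Tendsto φ (nhdsWithin b (Set.Ioi b)) (nhds φbp))
    (hdφam : Tendsto φ' (nhdsWithin a (Set.Iio a)) (nhds dφam))
    (hdφap : Tendsto φ' (nhdsWithin a (Set.Ioi a)) (nhds dφap))
    (hdφbm : Tendsto φ' (nhdsWithin b (Set.Iio b)) (nhds dφbm))
    (hdφbp : Tendsto φ' (nhdsWithin b (Set.Ioi b)) (nhds dφbp))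
    -- the second derivatives also extend continuously (one-sided limits exist)
    (hψ''lim : ∀ α ∈ ({a, b} : Set ℝ), ∀ s ∈ ({Set.Iio α, Set.Ioi α} : Set (Set ℝ)),
      ∃ l : ℂ, Tendsto ψ'' (nhdsWithin α s) (nhds l))
    (hφ''lim : ∀ α ∈ ({a, b} : Set ℝ), ∀ s ∈ ({Set.Iio α, Set.Ioi α} : Set (Set ℝ)),
      ∃ l : ℂ, Tendsto φ'' (nhdsWithin α s) (nhds l)) :
    (∫ x in ({a, b} : Set ℝ)ᶜ,
        ((starRingEnd ℂ) (ψ x) * (-φ'' x + (V x : ℂ) * φ x)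
          - (starRingEnd ℂ) (-ψ'' x + (V x : ℂ) * ψ x) * φ x))
      = star (![dψbm - dψbp, ψbp - ψbm, dψam - dψap, ψap - ψam]) ⬝ᵥ
          ((1 / 2 : ℂ) • ![φbp + φbm, dφbp + dφbm, φap + φam, dφap + dφam])
        - star ((1 / 2 : ℂ) • ![ψbp + ψbm, dψbp + dψbm, ψap + ψam, dψap + dψam]) ⬝ᵥ
          ![dφbm - dφbp, φbp - φbm, dφam - dφap, φap - φam] :=
  statement16_general a b hab V ψ φ hψsupp hφsupp ψ' ψ'' φ' φ'' hψd hψd2 hψ''c hφd hφd2 hφ''c ψam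
    ψap ψbm ψbp dψam dψap dψbm dψbp hψam hψap hψbm hψbp hdψam hdψap hdψbm hdψbp φam φap φbm φbp dφam
    dφap dφbm dφbp hφam hφap hφbm hφbp hdφam hdφap hdφbm hdφbp hψ''lim hφ''lim
end

section
/- Let g : ℝ → ℂ be continuous with compact support, let f : ℝ → [0,∞) be square integrable, and let q : ℝ × ℝ → ℂ be (jointly) measurable such that for every x ∈ ℝ the map k ↦ q(k,x) is continuous and |q(k,x)| ≤ f(x) for all k, x ∈ ℝ. Then lim_{|t| → ∞} ∫_ℝ | ∫_ℝ e^{−itk²}·q(k,x)·g(k) dk |² dx = 0. -/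
/-!
The substitution `u = k²` on each half-line turns `∫ e^{-itk²} h(k) dk` into a Fourier integral
`∫_{u>0} e^{-itu} h(±√u) / (2√u) du`, so the Riemann–Lebesgue lemma makes it tend to `0` as
`|t| → ∞`. Applied to `h = q(·, x) g`, this gives pointwise decay in `x`, and the bound
`|∫ e^{-itk²} q(k, x) g(k) dk| ≤ f(x) ‖g‖₁` with `f ∈ L²` lets dominated convergence finish.
-/

open MeasureTheory Filter Set Complex Topology

lemma tendsto_integral_exp_neg_I_mul (ψ : ℝ → ℂ) :
    Tendsto (fun t : ℝ => ∫ u : ℝ, exp (-(I * t * u)) * ψ u) (atBot ⊔ atTop) (𝓝 0) := by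
  have hscale : Tendsto (fun t : ℝ => t * (2 * Real.pi)⁻¹) (atBot ⊔ atTop) (cocompact ℝ) := by
    simpa only [← cocompact_eq_atBot_atTop] using
      tendsto_cocompact_mul_right₀ (inv_ne_zero Real.two_pi_pos.ne')
  refine ((Real.zero_at_infty_fourier ψ).comp hscale).congr fun t => ?_
  simp only [Function.comp_apply, Real.fourier_real_eq_integral_exp_smul, smul_eq_mul]
  congr! 3 with u
  push_cast
  field_simp

lemma setIntegral_Ioi_exp_mul_sq (t : ℝ) (h : ℝ → ℂ) :
    ∫ k in Ioi (0 : ℝ), exp (-(I * t * k ^ 2)) * h k =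
      ∫ u in Ioi (0 : ℝ), exp (-(I * t * u)) * (h (√u) / (2 * √u)) := by
  have hsq : (fun k : ℝ => k ^ 2) '' Ioi 0 = Ioi 0 :=
    Subset.antisymm (image_subset_iff.2 fun k (hk : 0 < k) => pow_pos hk 2)
      fun u (hu : 0 < u) => ⟨√u, Real.sqrt_pos.2 hu, Real.sq_sqrt hu.le⟩
  conv_rhs => rw [← hsq]
  rw [integral_image_eq_integral_abs_deriv_smul measurableSet_Ioi
    (fun k _ => (hasDerivAt_pow 2 k).hasDerivWithinAt)
    ((pow_left_strictMonoOn₀ two_ne_zero).mono Ioi_subset_Ici_self).injOn]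
  refine setIntegral_congr_fun measurableSet_Ioi fun k (hk : 0 < k) => ?_
  have hk' : (k : ℂ) ≠ 0 := ofReal_ne_zero.2 hk.ne'
  rw [Real.sqrt_sq hk.le, abs_of_pos (by positivity), real_smul]
  push_cast
  field_simp

lemma tendsto_setIntegral_Ioi_exp_mul_sq (h : ℝ → ℂ) :
    Tendsto (fun t : ℝ => ∫ k in Ioi (0 : ℝ), exp (-(I * t * k ^ 2)) * h k)
      (atBot ⊔ atTop) (𝓝 0) := by
  refine (tendsto_integral_exp_neg_I_mul ((Ioi 0).indicator fun u => h (√u) / (2 * √u))).congr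
    fun t => ?_
  rw [setIntegral_Ioi_exp_mul_sq, ← integral_indicator measurableSet_Ioi]
  simp_rw [indicator_mul_right]

lemma norm_exp_neg_I_mul_sq (t k : ℝ) : ‖exp (-(I * t * k ^ 2))‖ = 1 := by
  rw [norm_exp]
  simp [← ofReal_pow]

lemma tendsto_integral_exp_mul_sq {h : ℝ → ℂ} (hh : Integrable h) :
    Tendsto (fun t : ℝ => ∫ k : ℝ, exp (-(I * t * k ^ 2)) * h k) (atBot ⊔ atTop) (𝓝 0) := by
  have hint (t : ℝ) : Integrable fun k : ℝ => exp (-(I * t * k ^ 2)) * h k :=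
    hh.bdd_mul (by fun_prop) (.of_forall fun k => (norm_exp_neg_I_mul_sq t k).le)
  have hsplit (t : ℝ) : ∫ k : ℝ, exp (-(I * t * k ^ 2)) * h k =
      (∫ k in Ioi (0 : ℝ), exp (-(I * t * k ^ 2)) * h (-k)) +
        ∫ k in Ioi (0 : ℝ), exp (-(I * t * k ^ 2)) * h k := by
    have hreflect := integral_comp_neg_Ioi 0 fun k : ℝ => exp (-(I * t * k ^ 2)) * h k
    simp only [ofReal_neg, neg_sq, neg_zero] at hreflect
    rw [hreflect, intervalIntegral.integral_Iic_add_Ioi (hint t).integrableOn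
      (hint t).integrableOn]
  simpa [hsplit] using (tendsto_setIntegral_Ioi_exp_mul_sq (fun k => h (-k))).add
    (tendsto_setIntegral_Ioi_exp_mul_sq h)

lemma norm_integral_exp_mul_sq_mul_le {g : ℝ → ℂ} (hg : Integrable g) {q : ℝ → ℂ} {C : ℝ}
    (hq : ∀ k, ‖q k‖ ≤ C) (t : ℝ) :
    ‖∫ k : ℝ, exp (-(I * t * k ^ 2)) * q k * g k‖ ≤ C * ∫ k, ‖g k‖ := by
  refine (norm_integral_le_of_norm_le (hg.norm.const_mul C) (.of_forall fun k => ?_)).trans_eq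
    (integral_const_mul _ _)
  rw [norm_mul, norm_mul, norm_exp_neg_I_mul_sq, one_mul]
  gcongr
  exact hq k

theorem statement17_general
    (g : ℝ → ℂ) (hgc : Continuous g) (hgsupp : HasCompactSupport g)
    (f : ℝ → ℝ) (hf : MemLp f 2 (volume : Measure ℝ))
    (q : ℝ × ℝ → ℂ) (hqm : Measurable q)
    (hqb : ∀ k x : ℝ, ‖q (k, x)‖ ≤ f x) :
    Tendsto
      (fun t : ℝ => ∫ x : ℝ,
        ‖∫ k : ℝ, Complex.exp (-(Complex.I * t * k ^ 2)) * q (k, x) * g k‖ ^ 2)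
      (atBot ⊔ atTop) (nhds 0) := by
  have hg : Integrable g := hgc.integrable_of_hasCompactSupport hgsupp
  set C := ∫ k, ‖g k‖
  have hdom : Integrable fun x => (f x * C) ^ 2 := by
    simpa only [mul_pow] using hf.integrable_sq.mul_const (C ^ 2)
  have hmeas (t : ℝ) : AEStronglyMeasurable fun x : ℝ =>
      ‖∫ k : ℝ, exp (-(I * t * k ^ 2)) * q (k, x) * g k‖ ^ 2 :=
    ((StronglyMeasurable.integral_prod_right' (f := fun p : ℝ × ℝ =>
      exp (-(I * t * p.2 ^ 2)) * q (p.2, p.1) * g p.2)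
      (by fun_prop : Measurable _).stronglyMeasurable).aestronglyMeasurable.norm.pow 2)
  have hbound (t x : ℝ) : ‖‖∫ k : ℝ, exp (-(I * t * k ^ 2)) * q (k, x) * g k‖ ^ 2‖ ≤
      (f x * C) ^ 2 := by
    rw [norm_pow, norm_norm]
    gcongr
    exact norm_integral_exp_mul_sq_mul_le hg (hqb · x) t
  have hlim (x : ℝ) : Tendsto (fun t : ℝ =>
      ‖∫ k : ℝ, exp (-(I * t * k ^ 2)) * q (k, x) * g k‖ ^ 2) (atBot ⊔ atTop) (𝓝 0) := by
    have hqg : Integrable fun k => q (k, x) * g k :=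
      hg.bdd_mul (hqm.comp measurable_prodMk_right).aestronglyMeasurable
        (.of_forall fun k => hqb k x)
    simpa [mul_assoc] using ((tendsto_integral_exp_mul_sq hqg).norm.pow 2)
  simpa using tendsto_integral_filter_of_dominated_convergence _ (.of_forall hmeas)
    (.of_forall fun t => .of_forall (hbound t)) hdom (.of_forall hlim)

/-- Oscillatory-integral decay: if `g` is continuous with
compact support, `f ≥ 0` is square integrable and `q` is a jointly measurable
kernel, continuous in `k` and dominated by `f(x)`, then
`∫_ℝ |∫_ℝ e^{−itk²} q(k,x) g(k) dk|² dx → 0` as `t → ±∞`. -/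
theorem statement17
    (g : ℝ → ℂ) (hgc : Continuous g) (hgsupp : HasCompactSupport g)
    (f : ℝ → ℝ) (hf0 : ∀ x, 0 ≤ f x) (hf : MemLp f 2 (volume : Measure ℝ))
    (q : ℝ × ℝ → ℂ) (hqm : Measurable q)
    (hqc : ∀ x : ℝ, Continuous fun k => q (k, x))
    (hqb : ∀ k x : ℝ, ‖q (k, x)‖ ≤ f x) :
    Tendsto
      (fun t : ℝ => ∫ x : ℝ,
        ‖∫ k : ℝ, Complex.exp (-(Complex.I * t * k ^ 2)) * q (k, x) * g k‖ ^ 2)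
      (atBot ⊔ atTop) (nhds 0) :=
  statement17_general g hgc hgsupp f hf q hqm hqb
end
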